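/- arXiv:math/0212076 — 9 statements merged into one kernel-verified Lean document; each statement's English description precedes it below -/
import Mathlib

section
/- For probability density functions p and q on a measure space and any s with 0 < s < 1/2, the relative Rényi entropy I^s(p‖q) := -log ∫ p(ω)^s q(ω)^{1-s} dω satisfies 2s · I^{1/2}(p‖q) ≤ I^s(p‖q). -/
/-!
By Hölder's inequality `s ↦ log ∫ p ^ s * q ^ (1 - s)` is convex on `[0, 1]`, and it vanishes at
`s = 0`. Writing `s = 2s · (1/2) + (1 - 2s) · 0` gives `∫ p ^ s q ^ (1 - s) ≤ (∫ √(p q)) ^ (2s)`,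
which is the claim after taking `-log`. Writing `1/2` as a convex combination of `s` and `1` shows
in addition that the integral at `1/2` vanishes as soon as the one at `s` does, which covers the
junk value `log 0 = 0`.
-/

open MeasureTheory Real
open scoped ENNReal

section ChernoffCoeff

variable {Ω : Type*} [MeasurableSpace Ω] {μ : Measure Ω}

/-- `I^s(p‖q)` is `-log` of this coefficient taken at `ofReal ∘ p` and `ofReal ∘ q`. -/
noncomputable def chernoffCoeff (μ : Measure Ω) (f g : Ω → ℝ≥0∞) (s : ℝ) : ℝ≥0∞ :=
  ∫⁻ ω, f ω ^ s * g ω ^ (1 - s) ∂μ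

lemma chernoffCoeff_zero (f g : Ω → ℝ≥0∞) : chernoffCoeff μ f g 0 = ∫⁻ ω, g ω ∂μ := by
  simp [chernoffCoeff]

lemma chernoffCoeff_one (f g : Ω → ℝ≥0∞) : chernoffCoeff μ f g 1 = ∫⁻ ω, f ω ∂μ := by
  simp [chernoffCoeff]

lemma chernoffCoeff_add_le {f g : Ω → ℝ≥0∞} (hf : AEMeasurable f μ) (hg : AEMeasurable g μ)
    {s₀ s₁ a b : ℝ} (hs₀ : s₀ ∈ Set.Icc (0 : ℝ) 1) (hs₁ : s₁ ∈ Set.Icc (0 : ℝ) 1)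
    (ha : 0 ≤ a) (hb : 0 ≤ b) (hab : a + b = 1) :
    chernoffCoeff μ f g (a * s₀ + b * s₁)
      ≤ chernoffCoeff μ f g s₀ ^ a * chernoffCoeff μ f g s₁ ^ b := by
  obtain ⟨hs₀, hs₀'⟩ := hs₀
  obtain ⟨hs₁, hs₁'⟩ := hs₁
  have hsplit : ∀ ω, f ω ^ (a * s₀ + b * s₁) * g ω ^ (1 - (a * s₀ + b * s₁))
      = (f ω ^ s₀ * g ω ^ (1 - s₀)) ^ a * (f ω ^ s₁ * g ω ^ (1 - s₁)) ^ b := by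
    intro ω
    have hexp : 1 - (a * s₀ + b * s₁) = a * (1 - s₀) + b * (1 - s₁) := by
      linear_combination -hab
    rw [ENNReal.mul_rpow_of_nonneg _ _ ha, ENNReal.mul_rpow_of_nonneg _ _ hb,
      ← ENNReal.rpow_mul, ← ENNReal.rpow_mul, ← ENNReal.rpow_mul, ← ENNReal.rpow_mul, hexp,
      ENNReal.rpow_add_of_nonneg _ _ (by positivity) (by positivity),
      ENNReal.rpow_add_of_nonneg _ _ (by nlinarith) (by nlinarith)]
    ring_nf
  unfold chernoffCoeff
  simp_rw [hsplit]
  exact ENNReal.lintegral_mul_norm_pow_le ((hf.pow_const _).mul (hg.pow_const _))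
    ((hf.pow_const _).mul (hg.pow_const _)) ha hb hab

lemma chernoffCoeff_le_one {f g : Ω → ℝ≥0∞} (hf : AEMeasurable f μ) (hg : AEMeasurable g μ)
    (hf1 : ∫⁻ ω, f ω ∂μ = 1) (hg1 : ∫⁻ ω, g ω ∂μ = 1) {s : ℝ} (hs : 0 ≤ s) (hs' : s ≤ 1) :
    chernoffCoeff μ f g s ≤ 1 := by
  have := chernoffCoeff_add_le hf hg (s₀ := 1) (s₁ := 0) (a := s) (b := 1 - s) (by simp)
    (by simp) hs (by linarith) (by ring)
  simpa [chernoffCoeff_one, chernoffCoeff_zero, hf1, hg1] using this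

lemma chernoffCoeff_le_chernoffCoeff_half_rpow {f g : Ω → ℝ≥0∞} (hf : AEMeasurable f μ)
    (hg : AEMeasurable g μ) (hg1 : ∫⁻ ω, g ω ∂μ = 1) {s : ℝ} (hs : 0 ≤ s) (hs' : s ≤ 1 / 2) :
    chernoffCoeff μ f g s ≤ chernoffCoeff μ f g (1 / 2) ^ (2 * s) := by
  have := chernoffCoeff_add_le hf hg (s₀ := 1 / 2) (s₁ := 0) (a := 2 * s) (b := 1 - 2 * s)
    (by norm_num) (by simp) (by linarith) (by linarith) (by ring)
  simpa [chernoffCoeff_zero, hg1, mul_comm] using this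

lemma chernoffCoeff_half_le_rpow {f g : Ω → ℝ≥0∞} (hf : AEMeasurable f μ) (hg : AEMeasurable g μ)
    (hf1 : ∫⁻ ω, f ω ∂μ = 1) {s : ℝ} (hs : 0 ≤ s) (hs' : s < 1 / 2) :
    chernoffCoeff μ f g (1 / 2) ≤ chernoffCoeff μ f g s ^ (1 / (2 * (1 - s))) := by
  have h1s : 0 < 1 - s := by linarith
  have := chernoffCoeff_add_le hf hg (s₀ := s) (s₁ := 1) (a := 1 / (2 * (1 - s)))
    (b := (1 - 2 * s) / (2 * (1 - s))) ⟨hs, by linarith⟩ (by simp) (by positivity)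
    (div_nonneg (by linarith) (by positivity)) (by field_simp; ring)
  have hmid : 1 / (2 * (1 - s)) * s + (1 - 2 * s) / (2 * (1 - s)) * 1 = 1 / 2 := by
    field_simp; ring
  rwa [hmid, chernoffCoeff_one, hf1, ENNReal.one_rpow, mul_one] at this

end ChernoffCoeff

lemma integral_rpow_mul_rpow_eq_toReal_chernoffCoeff {Ω : Type*} [MeasurableSpace Ω]
    {μ : Measure Ω} {p q : Ω → ℝ} (hp : AEMeasurable p μ) (hq : AEMeasurable q μ)
    (hp0 : ∀ ω, 0 ≤ p ω) (hq0 : ∀ ω, 0 ≤ q ω) {s : ℝ} (hs : 0 ≤ s) (hs' : s ≤ 1) :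
    ∫ ω, p ω ^ s * q ω ^ (1 - s) ∂μ
      = (chernoffCoeff μ (fun ω ↦ .ofReal (p ω)) (fun ω ↦ .ofReal (q ω)) s).toReal := by
  have hnonneg : ∀ ω, 0 ≤ p ω ^ s * q ω ^ (1 - s) := fun ω ↦
    mul_nonneg (rpow_nonneg (hp0 ω) _) (rpow_nonneg (hq0 ω) _)
  rw [integral_eq_lintegral_of_nonneg_ae (ae_of_all _ hnonneg)
    (by fun_prop : AEMeasurable (fun ω ↦ p ω ^ s * q ω ^ (1 - s)) μ).aestronglyMeasurable,
    chernoffCoeff]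
  congr 1
  refine lintegral_congr fun ω ↦ ?_
  rw [ENNReal.ofReal_mul (rpow_nonneg (hp0 ω) s), ENNReal.ofReal_rpow_of_nonneg (hp0 ω) hs,
    ENNReal.ofReal_rpow_of_nonneg (hq0 ω) (by linarith)]

lemma lintegral_ofReal_eq_one {Ω : Type*} [MeasurableSpace Ω] {μ : Measure Ω} {p : Ω → ℝ}
    (hp0 : ∀ ω, 0 ≤ p ω) (hp1 : ∫ ω, p ω ∂μ = 1) : ∫⁻ ω, ENNReal.ofReal (p ω) ∂μ = 1 := by
  rw [← ofReal_integral_eq_lintegral_ofReal (.of_integral_ne_zero (by simp [hp1]))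
    (ae_of_all _ hp0), hp1, ENNReal.ofReal_one]

lemma ENNReal.toReal_le_toReal_rpow_of_le {x y : ℝ≥0∞} {t : ℝ} (ht : 0 ≤ t) (hy : y ≠ ⊤)
    (h : x ≤ y ^ t) : x.toReal ≤ y.toReal ^ t := by
  rw [ENNReal.toReal_rpow]
  exact ENNReal.toReal_mono (ENNReal.rpow_ne_top_of_nonneg ht hy) h

lemma mul_neg_log_le_neg_log {A B t u : ℝ} (hA : 0 ≤ A) (hB : 0 ≤ B) (ht : 0 < t) (hu : 0 < u)
    (hBA : B ≤ A ^ t) (hAB : A ≤ B ^ u) : t * -log A ≤ -log B := by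
  rcases hB.eq_or_lt with rfl | hBpos
  · have hA0 : A = 0 := le_antisymm (by simpa [zero_rpow hu.ne'] using hAB) hA
    simp [hA0]
  have hApos : 0 < A := by
    by_contra! hA0
    have : A = 0 := le_antisymm hA0 hA
    simp [this, zero_rpow ht.ne'] at hBA
    linarith
  have := log_le_log hBpos hBA
  rw [log_rpow hApos] at this
  linarith

theorem renyi_lower_bound_general {Ω : Type*} [MeasurableSpace Ω] (μ : Measure Ω)
    (p q : Ω → ℝ)
    (hp0 : ∀ ω, 0 ≤ p ω) (hq0 : ∀ ω, 0 ≤ q ω)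
    (hpi : ∫ ω, p ω ∂μ = 1) (hqi : ∫ ω, q ω ∂μ = 1)
    (s : ℝ) (hs : 0 < s) (hs' : s < 1/2) :
    2 * s * (-Real.log (∫ ω, p ω ^ (1/2 : ℝ) * q ω ^ (1/2 : ℝ) ∂μ))
      ≤ -Real.log (∫ ω, p ω ^ s * q ω ^ (1 - s) ∂μ) := by
  have hp : AEMeasurable p μ :=
    (Integrable.of_integral_ne_zero (by simp [hpi])).aestronglyMeasurable.aemeasurable
  have hq : AEMeasurable q μ :=
    (Integrable.of_integral_ne_zero (by simp [hqi])).aestronglyMeasurable.aemeasurable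
  have hP := hp.ennreal_ofReal
  have hQ := hq.ennreal_ofReal
  have hP1 := lintegral_ofReal_eq_one hp0 hpi
  have hQ1 := lintegral_ofReal_eq_one hq0 hqi
  set C := chernoffCoeff μ (fun ω ↦ ENNReal.ofReal (p ω)) (fun ω ↦ ENNReal.ofReal (q ω))
  have hC_ne_top : ∀ t, 0 ≤ t → t ≤ 1 → C t ≠ ⊤ := fun t ht ht' ↦
    ((chernoffCoeff_le_one hP hQ hP1 hQ1 ht ht').trans_lt ENNReal.one_lt_top).ne
  have hA : ∫ ω, p ω ^ (1/2 : ℝ) * q ω ^ (1/2 : ℝ) ∂μ = (C (1 / 2)).toReal := by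
    have := integral_rpow_mul_rpow_eq_toReal_chernoffCoeff hp hq hp0 hq0 (μ := μ)
      (s := 1 / 2) (by norm_num) (by norm_num)
    rwa [show (1 : ℝ) - 1 / 2 = 1 / 2 by norm_num] at this
  rw [hA, integral_rpow_mul_rpow_eq_toReal_chernoffCoeff hp hq hp0 hq0 hs.le (by linarith)]
  have h1s : 0 < 1 - s := by linarith
  exact mul_neg_log_le_neg_log ENNReal.toReal_nonneg ENNReal.toReal_nonneg (by positivity)
    (u := 1 / (2 * (1 - s))) (by positivity)
    (ENNReal.toReal_le_toReal_rpow_of_le (by positivity) (hC_ne_top _ (by norm_num) (by norm_num))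
      (chernoffCoeff_le_chernoffCoeff_half_rpow hP hQ hQ1 hs.le hs'.le))
    (ENNReal.toReal_le_toReal_rpow_of_le (by positivity) (hC_ne_top _ hs.le (by linarith))
      (chernoffCoeff_half_le_rpow hP hQ hP1 hs.le hs'))

theorem renyi_lower_bound {Ω : Type*} [MeasurableSpace Ω] (μ : Measure Ω)
    (p q : Ω → ℝ) (hp : Measurable p) (hq : Measurable q)
    (hp0 : ∀ ω, 0 ≤ p ω) (hq0 : ∀ ω, 0 ≤ q ω)
    (hpi : ∫ ω, p ω ∂μ = 1) (hqi : ∫ ω, q ω ∂μ = 1)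
    (s : ℝ) (hs : 0 < s) (hs' : s < 1/2) :
    2 * s * (-Real.log (∫ ω, p ω ^ (1/2 : ℝ) * q ω ^ (1/2 : ℝ) ∂μ))
      ≤ -Real.log (∫ ω, p ω ^ s * q ω ^ (1 - s) ∂μ) :=
  renyi_lower_bound_general μ p q hp0 hq0 hpi hqi s hs hs'
end

section
/- For probability density functions p and q and any s with 0 < s < 1/2, the relative Rényi entropy satisfies I^s(p‖q) ≤ 2(1-s) · I^{1/2}(p‖q). -/
/-!
By Hölder's inequality, `s ↦ log ∫ p^s q^(1-s)` is convex on `[0, 1]`. Writing `A` and `B` for the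
integrals at orders `s` and `1/2`, the order `1/2` lies between `s` and `1`, where the integral is
`∫ p = 1`, so `B ≤ A ^ (1 / (2(1-s)))`; taking logarithms gives the bound. Interpolating `s`
between `0` and `1/2` also gives `A ≤ B ^ (2s)`, which settles the degenerate case `B = 0`.
-/

open MeasureTheory Real

/-- The Hellinger integral of order `s`; the paper's `I^s(p‖q)` is its `-log`. -/
noncomputable def hellingerIntegral {Ω : Type*} [MeasurableSpace Ω] (μ : Measure Ω)
    (p q : Ω → ℝ) (s : ℝ) : ℝ :=
  ∫ ω, p ω ^ s * q ω ^ (1 - s) ∂μ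

section

variable {Ω : Type*} [MeasurableSpace Ω] {μ : Measure Ω} {p q : Ω → ℝ}

lemma integrable_rpow_mul_rpow (hp : Integrable p μ) (hq : Integrable q μ) (hp0 : 0 ≤ p)
    (hq0 : 0 ≤ q) {s : ℝ} (hs₀ : 0 ≤ s) (hs₁ : s ≤ 1) :
    Integrable (fun ω ↦ p ω ^ s * q ω ^ (1 - s)) μ := by
  refine ((hp.const_mul s).add (hq.const_mul (1 - s))).mono'
    ((hp.aemeasurable.pow_const s).mul (hq.aemeasurable.pow_const _)).aestronglyMeasurable
    (ae_of_all _ fun ω ↦ ?_)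
  rw [norm_of_nonneg (mul_nonneg (rpow_nonneg (hp0 ω) _) (rpow_nonneg (hq0 ω) _))]
  exact geom_mean_le_arith_mean2_weighted hs₀ (sub_nonneg.2 hs₁) (hp0 ω) (hq0 ω) (by ring)

lemma memLp_rpow_of_integrable {F : Ω → ℝ} (hF : Integrable F μ) (hF0 : 0 ≤ F) {θ : ℝ}
    (hθ : 0 < θ) : MemLp (fun ω ↦ F ω ^ θ) (ENNReal.ofReal θ⁻¹) μ := by
  have hmeas : AEStronglyMeasurable (fun ω ↦ F ω ^ θ) μ :=
    (hF.aemeasurable.pow_const θ).aestronglyMeasurable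
  rw [← integrable_norm_rpow_iff hmeas (by simpa using hθ) ENNReal.ofReal_ne_top,
    ENNReal.toReal_ofReal (inv_nonneg.2 hθ.le)]
  refine hF.congr (ae_of_all _ fun ω ↦ ?_)
  dsimp only
  rw [norm_of_nonneg (rpow_nonneg (hF0 ω) θ), rpow_rpow_inv (hF0 ω) hθ.ne']

lemma rpow_mul_rpow_rpow {x y : ℝ} (hx : 0 ≤ x) (hy : 0 ≤ y) (a b t : ℝ) :
    (x ^ a * y ^ b) ^ t = x ^ (a * t) * y ^ (b * t) := by
  rw [mul_rpow (rpow_nonneg hx a) (rpow_nonneg hy b), ← rpow_mul hx, ← rpow_mul hy]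

lemma hellingerIntegral_le_rpow_mul_rpow (hp0 : 0 ≤ p) (hq0 : 0 ≤ q) {u v θ : ℝ}
    (hu : u ∈ Set.Icc (0 : ℝ) 1) (hv : v ∈ Set.Icc (0 : ℝ) 1) (hθ₀ : 0 < θ) (hθ₁ : θ < 1)
    (hu_int : Integrable (fun ω ↦ p ω ^ u * q ω ^ (1 - u)) μ)
    (hv_int : Integrable (fun ω ↦ p ω ^ v * q ω ^ (1 - v)) μ) :
    hellingerIntegral μ p q (θ * u + (1 - θ) * v)
      ≤ hellingerIntegral μ p q u ^ θ * hellingerIntegral μ p q v ^ (1 - θ) := by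
  unfold hellingerIntegral
  set F : Ω → ℝ := fun ω ↦ p ω ^ u * q ω ^ (1 - u)
  set G : Ω → ℝ := fun ω ↦ p ω ^ v * q ω ^ (1 - v)
  have hF0 : 0 ≤ F := fun ω ↦ mul_nonneg (rpow_nonneg (hp0 ω) _) (rpow_nonneg (hq0 ω) _)
  have hG0 : 0 ≤ G := fun ω ↦ mul_nonneg (rpow_nonneg (hp0 ω) _) (rpow_nonneg (hq0 ω) _)
  have hθ₁' : 0 < 1 - θ := sub_pos.2 hθ₁
  have holder := integral_mul_le_Lp_mul_Lq_of_nonneg (μ := μ)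
    (Real.HolderConjugate.inv_one_sub_inv hθ₀ hθ₁)
    (ae_of_all _ fun ω ↦ rpow_nonneg (hF0 ω) θ) (ae_of_all _ fun ω ↦ rpow_nonneg (hG0 ω) (1 - θ))
    (memLp_rpow_of_integrable hu_int hF0 hθ₀) (memLp_rpow_of_integrable hv_int hG0 hθ₁')
  have hprod : ∀ ω, F ω ^ θ * G ω ^ (1 - θ)
      = p ω ^ (θ * u + (1 - θ) * v) * q ω ^ (1 - (θ * u + (1 - θ) * v)) := fun ω ↦ by
    obtain ⟨hu₀, hu₁⟩ := hu
    obtain ⟨hv₀, hv₁⟩ := hv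
    rw [rpow_mul_rpow_rpow (hp0 ω) (hq0 ω), rpow_mul_rpow_rpow (hp0 ω) (hq0 ω),
      mul_mul_mul_comm, ← rpow_add_of_nonneg (hp0 ω) (by positivity) (by positivity),
      ← rpow_add_of_nonneg (hq0 ω) (by nlinarith) (by nlinarith)]
    ring_nf
  have hF : ∀ ω, (F ω ^ θ) ^ θ⁻¹ = F ω := fun ω ↦ rpow_rpow_inv (hF0 ω) hθ₀.ne'
  have hG : ∀ ω, (G ω ^ (1 - θ)) ^ (1 - θ)⁻¹ = G ω := fun ω ↦ rpow_rpow_inv (hG0 ω) hθ₁'.ne'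
  simpa only [hprod, hF, hG, one_div, inv_inv] using holder

lemma hellingerIntegral_nonneg (hp0 : 0 ≤ p) (hq0 : 0 ≤ q) (s : ℝ) :
    0 ≤ hellingerIntegral μ p q s :=
  integral_nonneg fun ω ↦ mul_nonneg (rpow_nonneg (hp0 ω) _) (rpow_nonneg (hq0 ω) _)

lemma hellingerIntegral_one : hellingerIntegral μ p q 1 = ∫ ω, p ω ∂μ := by
  simp [hellingerIntegral]

lemma hellingerIntegral_zero : hellingerIntegral μ p q 0 = ∫ ω, q ω ∂μ := by
  simp [hellingerIntegral]

end

lemma neg_log_le_inv_mul_neg_log {A B θ c : ℝ} (hθ : 0 < θ) (hc : 0 < c) (hA : 0 ≤ A)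
    (hB : 0 ≤ B) (hBA : B ≤ A ^ θ) (hAB : A ≤ B ^ c) : -log A ≤ θ⁻¹ * -log B := by
  rcases hB.eq_or_lt with rfl | hB
  · have : A = 0 := le_antisymm (by simpa [zero_rpow hc.ne'] using hAB) hA
    simp [this]
  have hA : 0 < A := by
    refine hA.lt_of_ne fun hA0 ↦ ?_
    rw [← hA0, zero_rpow hθ.ne'] at hBA
    linarith
  have : log B ≤ θ * log A := by
    simpa [log_rpow hA] using log_le_log hB hBA
  rw [mul_neg, neg_le_neg_iff, inv_mul_le_iff₀ hθ]
  linarith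

theorem renyi_upper_bound_general {Ω : Type*} [MeasurableSpace Ω] (μ : Measure Ω)
    (p q : Ω → ℝ)
    (hp0 : ∀ ω, 0 ≤ p ω) (hq0 : ∀ ω, 0 ≤ q ω)
    (hpi : ∫ ω, p ω ∂μ = 1) (hqi : ∫ ω, q ω ∂μ = 1)
    (s : ℝ) (hs : 0 < s) (hs' : s < 1/2) :
    -Real.log (∫ ω, p ω ^ s * q ω ^ (1 - s) ∂μ)
      ≤ 2 * (1 - s) * (-Real.log (∫ ω, p ω ^ (1/2 : ℝ) * q ω ^ (1/2 : ℝ) ∂μ)) := by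
  have hp_int : Integrable p μ := .of_integral_ne_zero (by simp [hpi])
  have hq_int : Integrable q μ := .of_integral_ne_zero (by simp [hqi])
  have hint (u : ℝ) (hu : u ∈ Set.Icc (0 : ℝ) 1) :=
    integrable_rpow_mul_rpow hp_int hq_int hp0 hq0 hu.1 hu.2
  have hs_mem : s ∈ Set.Icc (0 : ℝ) 1 := ⟨hs.le, by linarith⟩
  have hhalf_mem : (1 / 2 : ℝ) ∈ Set.Icc (0 : ℝ) 1 := ⟨by norm_num, by norm_num⟩
  have h1s : 0 < 1 - s := by linarith
  have hB := hellingerIntegral_le_rpow_mul_rpow hp0 hq0 hs_mem (Set.right_mem_Icc.2 zero_le_one)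
    (θ := (2 * (1 - s))⁻¹) (by positivity) (inv_lt_one_of_one_lt₀ (by linarith))
    (hint s hs_mem) (hint 1 (Set.right_mem_Icc.2 zero_le_one))
  have hA := hellingerIntegral_le_rpow_mul_rpow hp0 hq0 hhalf_mem (Set.left_mem_Icc.2 zero_le_one)
    (θ := 2 * s) (by positivity) (by linarith) (hint _ hhalf_mem)
    (hint 0 (Set.left_mem_Icc.2 zero_le_one))
  rw [show (2 * (1 - s))⁻¹ * s + (1 - (2 * (1 - s))⁻¹) * 1 = 1 / 2 by field_simp; ring,
    hellingerIntegral_one, hpi, one_rpow, mul_one] at hB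
  rw [show 2 * s * (1 / 2) + (1 - 2 * s) * 0 = s by ring,
    hellingerIntegral_zero, hqi, one_rpow, mul_one] at hA
  have hhalf : hellingerIntegral μ p q (1 / 2) = ∫ ω, p ω ^ (1/2 : ℝ) * q ω ^ (1/2 : ℝ) ∂μ := by
    norm_num [hellingerIntegral]
  have hlog := neg_log_le_inv_mul_neg_log (by positivity) (by positivity)
    (hellingerIntegral_nonneg hp0 hq0 s) (hellingerIntegral_nonneg hp0 hq0 _) hB hA
  rwa [inv_inv, hhalf] at hlog

theorem renyi_upper_bound {Ω : Type*} [MeasurableSpace Ω] (μ : Measure Ω)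
    (p q : Ω → ℝ) (hp : Measurable p) (hq : Measurable q)
    (hp0 : ∀ ω, 0 ≤ p ω) (hq0 : ∀ ω, 0 ≤ q ω)
    (hpi : ∫ ω, p ω ∂μ = 1) (hqi : ∫ ω, q ω ∂μ = 1)
    (s : ℝ) (hs : 0 < s) (hs' : s < 1/2) :
    -Real.log (∫ ω, p ω ^ s * q ω ^ (1 - s) ∂μ)
      ≤ 2 * (1 - s) * (-Real.log (∫ ω, p ω ^ (1/2 : ℝ) * q ω ^ (1/2 : ℝ) ∂μ)) :=
  renyi_upper_bound_general μ p q hp0 hq0 hpi hqi s hs hs'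
end

section
/- For probability densities p and q and any s with 0 < s < 1, the two-sided bound 2·min{s, 1-s} · I^{1/2}(p‖q) ≤ I^s(p‖q) ≤ 2·max{s, 1-s} · I^{1/2}(p‖q) holds, where I^s(p‖q) = -log ∫ p^s q^{1-s} dμ. -/
open MeasureTheory Real

private lemma geom_integrable {Ω : Type*} [MeasurableSpace Ω] {μ : Measure Ω}
    {f g : Ω → ℝ} (hf : Measurable f) (hg : Measurable g)
    (hf0 : ∀ ω, 0 ≤ f ω) (hg0 : ∀ ω, 0 ≤ g ω)
    (hfi : Integrable f μ) (hgi : Integrable g μ)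
    {t : ℝ} (ht : 0 ≤ t) (ht' : t ≤ 1) :
    Integrable (fun ω => f ω ^ t * g ω ^ (1 - t)) μ := by
  refine Integrable.mono' ((hfi.const_mul t).add (hgi.const_mul (1 - t))) ?_ ?_
  · exact ((hf.pow_const t).mul (hg.pow_const (1 - t))).aestronglyMeasurable
  · filter_upwards with ω
    rw [Real.norm_of_nonneg (mul_nonneg (Real.rpow_nonneg (hf0 ω) _)
      (Real.rpow_nonneg (hg0 ω) _))]
    exact Real.geom_mean_le_arith_mean2_weighted ht
      (by linarith : (0:ℝ) ≤ 1 - t) (hf0 ω) (hg0 ω) (by ring)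

private lemma holder_two {Ω : Type*} [MeasurableSpace Ω] {μ : Measure Ω}
    {f g : Ω → ℝ} (hf : Measurable f) (hg : Measurable g)
    (hf0 : ∀ ω, 0 ≤ f ω) (hg0 : ∀ ω, 0 ≤ g ω)
    (hfi : Integrable f μ) (hgi : Integrable g μ)
    {t : ℝ} (ht : 0 < t) (ht' : t < 1) :
    ∫ ω, f ω ^ t * g ω ^ (1 - t) ∂μ
      ≤ (∫ ω, f ω ∂μ) ^ t * (∫ ω, g ω ∂μ) ^ (1 - t) := by
  set A := ∫ ω, f ω ∂μ with hA_def
  set B := ∫ ω, g ω ∂μ with hB_def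
  have hA : 0 ≤ A := integral_nonneg hf0
  have hB : 0 ≤ B := integral_nonneg hg0
  rcases hA.eq_or_lt with hA0 | hA0
  · have hf0' : f =ᵐ[μ] 0 := (integral_eq_zero_iff_of_nonneg hf0 hfi).mp hA0.symm
    have hz : (fun ω => f ω ^ t * g ω ^ (1 - t)) =ᵐ[μ] 0 := by
      filter_upwards [hf0'] with ω hω
      simp [hω, Real.zero_rpow ht.ne']
    rw [integral_congr_ae hz, ← hA0, Real.zero_rpow ht.ne', zero_mul]
    simp
  rcases hB.eq_or_lt with hB0 | hB0
  · have hg0' : g =ᵐ[μ] 0 := (integral_eq_zero_iff_of_nonneg hg0 hgi).mp hB0.symm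
    have hz : (fun ω => f ω ^ t * g ω ^ (1 - t)) =ᵐ[μ] 0 := by
      filter_upwards [hg0'] with ω hω
      simp [hω, Real.zero_rpow (by linarith : (1 : ℝ) - t ≠ 0)]
    rw [integral_congr_ae hz, ← hB0,
      Real.zero_rpow (by linarith : (1 : ℝ) - t ≠ 0), mul_zero]
    simp
  -- main case : A > 0, B > 0
  set C := A ^ t * B ^ (1 - t) with hC_def
  have hC : 0 < C := mul_pos (Real.rpow_pos_of_pos hA0 _) (Real.rpow_pos_of_pos hB0 _)
  have key : ∀ ω, f ω ^ t * g ω ^ (1 - t)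
      ≤ (C * t / A) * f ω + (C * (1 - t) / B) * g ω := by
    intro ω
    have h1 := Real.geom_mean_le_arith_mean2_weighted (w₁ := t) (w₂ := 1 - t)
      (p₁ := f ω / A) (p₂ := g ω / B) ht.le (by linarith)
      (div_nonneg (hf0 ω) hA) (div_nonneg (hg0 ω) hB) (by ring)
    have e1 : (f ω / A) ^ t = f ω ^ t / A ^ t := Real.div_rpow (hf0 ω) hA t
    have e2 : (g ω / B) ^ (1 - t) = g ω ^ (1 - t) / B ^ (1 - t) :=
      Real.div_rpow (hg0 ω) hB (1 - t)
    rw [e1, e2] at h1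
    have h2 := mul_le_mul_of_nonneg_left h1 hC.le
    have hAt : (0 : ℝ) < A ^ t := Real.rpow_pos_of_pos hA0 _
    have hBt : (0 : ℝ) < B ^ (1 - t) := Real.rpow_pos_of_pos hB0 _
    calc f ω ^ t * g ω ^ (1 - t)
        = C * (f ω ^ t / A ^ t * (g ω ^ (1 - t) / B ^ (1 - t))) := by
          rw [hC_def]; field_simp
      _ ≤ C * (t * (f ω / A) + (1 - t) * (g ω / B)) := h2
      _ = (C * t / A) * f ω + (C * (1 - t) / B) * g ω := by ring
  have hrhs : Integrable (fun ω => (C * t / A) * f ω + (C * (1 - t) / B) * g ω) μ :=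
    (hfi.const_mul _).add (hgi.const_mul _)
  calc ∫ ω, f ω ^ t * g ω ^ (1 - t) ∂μ
      ≤ ∫ ω, ((C * t / A) * f ω + (C * (1 - t) / B) * g ω) ∂μ :=
        integral_mono (geom_integrable hf hg hf0 hg0 hfi hgi ht.le ht'.le) hrhs key
    _ = (C * t / A) * A + (C * (1 - t) / B) * B := by
        rw [integral_add (hfi.const_mul _) (hgi.const_mul _),
          integral_const_mul, integral_const_mul]
    _ = C := by field_simp; ring

private lemma log_bounds {Z H m M : ℝ} (hZ : 0 ≤ Z) (hH : 0 ≤ H)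
    (hm : 0 < m) (hM : 0 < M)
    (h1 : Z ≤ H ^ (2 * m)) (h2 : H ≤ Z ^ (1 / (2 * M))) :
    2 * m * (-Real.log H) ≤ -Real.log Z ∧ -Real.log Z ≤ 2 * M * (-Real.log H) := by
  rcases hH.eq_or_lt with hH0 | hH0
  · have hZ0 : Z = 0 := le_antisymm (by
      rw [← hH0, Real.zero_rpow (by positivity : (2 : ℝ) * m ≠ 0)] at h1; exact h1) hZ
    simp [hZ0, ← hH0]
  · have hZ0 : 0 < Z := by
      rcases hZ.eq_or_lt with h | h
      · rw [← h, Real.zero_rpow (by positivity : (1 : ℝ) / (2 * M) ≠ 0)] at h2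
        linarith
      · exact h
    constructor
    · have := Real.log_le_log hZ0 h1
      rw [Real.log_rpow hH0] at this
      linarith
    · have h0 := Real.log_le_log hH0 h2
      rw [Real.log_rpow hZ0] at h0
      have h3 : 2 * M * Real.log H ≤ Real.log Z := by
        have h4 := mul_le_mul_of_nonneg_left h0 (by positivity : (0 : ℝ) ≤ 2 * M)
        calc 2 * M * Real.log H ≤ 2 * M * (1 / (2 * M) * Real.log Z) := h4
          _ = Real.log Z := by field_simp
      linarith

theorem renyi_two_sided_bound {Ω : Type*} [MeasurableSpace Ω] (μ : Measure Ω)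
    (p q : Ω → ℝ) (hp : Measurable p) (hq : Measurable q)
    (hp0 : ∀ ω, 0 ≤ p ω) (hq0 : ∀ ω, 0 ≤ q ω)
    (hpi : ∫ ω, p ω ∂μ = 1) (hqi : ∫ ω, q ω ∂μ = 1)
    (s : ℝ) (hs : 0 < s) (hs' : s < 1) :
    2 * min s (1 - s) * (-Real.log (∫ ω, p ω ^ (1/2 : ℝ) * q ω ^ (1/2 : ℝ) ∂μ))
        ≤ -Real.log (∫ ω, p ω ^ s * q ω ^ (1 - s) ∂μ) ∧
    -Real.log (∫ ω, p ω ^ s * q ω ^ (1 - s) ∂μ)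
        ≤ 2 * max s (1 - s) * (-Real.log (∫ ω, p ω ^ (1/2 : ℝ) * q ω ^ (1/2 : ℝ) ∂μ)) := by
  have hpint : Integrable p μ := by
    by_contra h; rw [integral_undef h] at hpi; norm_num at hpi
  have hqint : Integrable q μ := by
    by_contra h; rw [integral_undef h] at hqi; norm_num at hqi
  set Z := ∫ ω, p ω ^ s * q ω ^ (1 - s) ∂μ with hZ_def
  set H := ∫ ω, p ω ^ (1/2 : ℝ) * q ω ^ (1/2 : ℝ) ∂μ with hH_def
  have hZ : 0 ≤ Z := integral_nonneg fun ω =>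
    mul_nonneg (Real.rpow_nonneg (hp0 ω) _) (Real.rpow_nonneg (hq0 ω) _)
  have hH : 0 ≤ H := integral_nonneg fun ω =>
    mul_nonneg (Real.rpow_nonneg (hp0 ω) _) (Real.rpow_nonneg (hq0 ω) _)
  have hgm : Measurable fun ω => p ω ^ (1/2 : ℝ) * q ω ^ (1/2 : ℝ) :=
    (hp.pow_const _).mul (hq.pow_const _)
  have hgm0 : ∀ ω, 0 ≤ p ω ^ (1/2 : ℝ) * q ω ^ (1/2 : ℝ) := fun ω =>
    mul_nonneg (Real.rpow_nonneg (hp0 ω) _) (Real.rpow_nonneg (hq0 ω) _)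
  have hgint : Integrable (fun ω => p ω ^ (1/2 : ℝ) * q ω ^ (1/2 : ℝ)) μ := by
    have h := geom_integrable hp hq hp0 hq0 hpint hqint
      (t := 1/2) (by norm_num) (by norm_num)
    have e : (fun ω => p ω ^ (1/2 : ℝ) * q ω ^ (1/2 : ℝ))
        = fun ω => p ω ^ (1/2 : ℝ) * q ω ^ (1 - 1/2 : ℝ) := by norm_num
    rw [e]; exact h
  have hsm : Measurable fun ω => p ω ^ s * q ω ^ (1 - s) :=
    (hp.pow_const _).mul (hq.pow_const _)
  have hsm0 : ∀ ω, 0 ≤ p ω ^ s * q ω ^ (1 - s) := fun ω =>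
    mul_nonneg (Real.rpow_nonneg (hp0 ω) _) (Real.rpow_nonneg (hq0 ω) _)
  have hsint : Integrable (fun ω => p ω ^ s * q ω ^ (1 - s)) μ :=
    geom_integrable hp hq hp0 hq0 hpint hqint hs.le hs'.le
  rcases lt_trichotomy s (1/2) with hcase | hcase | hcase
  · -- s < 1/2 : min = s, max = 1 - s
    have hmin : min s (1 - s) = s := min_eq_left (by linarith)
    have hmax : max s (1 - s) = 1 - s := max_eq_right (by linarith)
    have h1 : Z ≤ H ^ (2 * s) := by
      have hold := holder_two hgm hq hgm0 hq0 hgint hqint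
        (t := 2 * s) (by linarith) (by linarith)
      have epw : ∀ ω, (p ω ^ (1/2 : ℝ) * q ω ^ (1/2 : ℝ)) ^ (2 * s) * q ω ^ (1 - 2 * s)
          = p ω ^ s * q ω ^ (1 - s) := by
        intro ω
        rw [Real.mul_rpow (Real.rpow_nonneg (hp0 ω) _) (Real.rpow_nonneg (hq0 ω) _),
          ← Real.rpow_mul (hp0 ω), ← Real.rpow_mul (hq0 ω),
          show (1/2 : ℝ) * (2 * s) = s from by ring, mul_assoc,
          ← Real.rpow_add' (hq0 ω)
            (by rw [show s + (1 - 2 * s) = 1 - s from by ring]; exact ne_of_gt (by linarith)),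
          show s + (1 - 2 * s) = 1 - s from by ring]
      rw [integral_congr_ae (Filter.Eventually.of_forall epw)] at hold
      rw [← hH_def, hqi, Real.one_rpow, mul_one] at hold
      exact hold
    have h2 : H ≤ Z ^ (1 / (2 * (1 - s))) := by
      set θ := 1 / (2 * (1 - s)) with hθ_def
      have h1s : (0:ℝ) < 1 - s := by linarith
      have hθ0 : 0 < θ := by rw [hθ_def]; positivity
      have hθ1 : θ < 1 := by
        rw [hθ_def, div_lt_one (by linarith)]; linarith
      have hold := holder_two hsm hp hsm0 hp0 hsint hpint hθ0 hθ1
      have hep : s * θ + (1 - θ) = 1/2 := by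
        rw [hθ_def]; field_simp; ring
      have heq : (1 - s) * θ = 1/2 := by
        rw [hθ_def]; field_simp
      have epw : ∀ ω, (p ω ^ s * q ω ^ (1 - s)) ^ θ * p ω ^ (1 - θ)
          = p ω ^ (1/2 : ℝ) * q ω ^ (1/2 : ℝ) := by
        intro ω
        rw [Real.mul_rpow (Real.rpow_nonneg (hp0 ω) _) (Real.rpow_nonneg (hq0 ω) _),
          ← Real.rpow_mul (hp0 ω), ← Real.rpow_mul (hq0 ω), heq, mul_right_comm,
          ← Real.rpow_add' (hp0 ω) (by rw [hep]; norm_num), hep]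
      rw [integral_congr_ae (Filter.Eventually.of_forall epw)] at hold
      rw [← hH_def, ← hZ_def, hpi, Real.one_rpow, mul_one] at hold
      exact hold
    rw [hmin, hmax]
    exact log_bounds hZ hH hs (by linarith) h1 h2
  · -- s = 1/2
    have hZH : Z = H := by
      rw [hZ_def, hH_def, hcase]; norm_num
    rw [hZH, hcase]
    norm_num
  · -- s > 1/2 : min = 1 - s, max = s
    have hmin : min s (1 - s) = 1 - s := min_eq_right (by linarith)
    have hmax : max s (1 - s) = s := max_eq_left (by linarith)
    have h1 : Z ≤ H ^ (2 * (1 - s)) := by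
      have hold := holder_two hgm hp hgm0 hp0 hgint hpint
        (t := 2 * (1 - s)) (by linarith) (by linarith)
      have epw : ∀ ω, (p ω ^ (1/2 : ℝ) * q ω ^ (1/2 : ℝ)) ^ (2 * (1 - s))
          * p ω ^ (1 - 2 * (1 - s)) = p ω ^ s * q ω ^ (1 - s) := by
        intro ω
        rw [Real.mul_rpow (Real.rpow_nonneg (hp0 ω) _) (Real.rpow_nonneg (hq0 ω) _),
          ← Real.rpow_mul (hp0 ω), ← Real.rpow_mul (hq0 ω),
          show (1/2 : ℝ) * (2 * (1 - s)) = 1 - s from by ring, mul_right_comm,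
          ← Real.rpow_add' (hp0 ω)
            (by rw [show (1 - s) + (1 - 2 * (1 - s)) = s from by ring];
                exact ne_of_gt hs),
          show (1 - s) + (1 - 2 * (1 - s)) = s from by ring]
      rw [integral_congr_ae (Filter.Eventually.of_forall epw)] at hold
      rw [← hH_def, hpi, Real.one_rpow, mul_one] at hold
      exact hold
    have h2 : H ≤ Z ^ (1 / (2 * s)) := by
      set θ := 1 / (2 * s) with hθ_def
      have hθ0 : 0 < θ := by rw [hθ_def]; positivity
      have hθ1 : θ < 1 := by
        rw [hθ_def, div_lt_one (by linarith)]; linarith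
      have hold := holder_two hsm hq hsm0 hq0 hsint hqint hθ0 hθ1
      have hep : s * θ = 1/2 := by
        rw [hθ_def]; field_simp
      have heq : (1 - s) * θ + (1 - θ) = 1/2 := by
        rw [hθ_def]; field_simp; ring
      have epw : ∀ ω, (p ω ^ s * q ω ^ (1 - s)) ^ θ * q ω ^ (1 - θ)
          = p ω ^ (1/2 : ℝ) * q ω ^ (1/2 : ℝ) := by
        intro ω
        rw [Real.mul_rpow (Real.rpow_nonneg (hp0 ω) _) (Real.rpow_nonneg (hq0 ω) _),
          ← Real.rpow_mul (hp0 ω), ← Real.rpow_mul (hq0 ω), hep, mul_assoc,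
          ← Real.rpow_add' (hq0 ω) (by rw [heq]; norm_num), heq]
      rw [integral_congr_ae (Filter.Eventually.of_forall epw)] at hold
      rw [← hH_def, ← hZ_def, hqi, Real.one_rpow, mul_one] at hold
      exact hold
    rw [hmin, hmax]
    exact log_bounds hZ hH (by linarith) hs h1 h2
end

section
/- For any fixed δ > 0, lim_{ε → 0+} (1/(ε² log ε)) · ∫_ε^δ [exp(ε/x)·(x - ε) - x] dx = 1/2. -/
/-!
Since `exp t * (1 - t) = 1 - t ^ 2 / 2 + O(t ^ 3)` for `|t| ≤ 1`, substituting `t = ε / x` shows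
that on `[ε, δ]` the integrand is `-ε ^ 2 / (2 * x) + O(ε ^ 3 / x ^ 2)`. The main term
integrates to `ε ^ 2 / 2 * (log ε - log δ)` and the error to `O(ε ^ 2)`, so the integral is
asymptotically equivalent to `ε ^ 2 / 2 * log ε` as `ε → 0⁺`.
-/

open Filter Set intervalIntegral Real Asymptotics Topology MeasureTheory

lemma Real.abs_exp_sub_quadratic_le {t : ℝ} (ht : |t| ≤ 1) :
    |exp t - (1 + t + t ^ 2 / 2)| ≤ |t| ^ 3 := by
  have h := Real.exp_bound ht (n := 3) (by norm_num)
  have hsum : ∑ m ∈ Finset.range 3, t ^ m / m.factorial = 1 + t + t ^ 2 / 2 := by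
    norm_num [Finset.sum_range_succ, Nat.factorial]
  rw [hsum] at h
  refine h.trans ?_
  norm_num [Nat.factorial]
  nlinarith [pow_nonneg (abs_nonneg t) 3]

lemma Real.abs_exp_mul_one_sub_sub_le {t : ℝ} (ht : |t| ≤ 1) :
    |exp t * (1 - t) - 1 + t ^ 2 / 2| ≤ 2 * |t| ^ 3 := by
  have hsplit : exp t * (1 - t) - 1 + t ^ 2 / 2 =
      (exp t - (1 + t + t ^ 2 / 2)) - t * (exp t - 1 - t) := by ring
  calc |exp t * (1 - t) - 1 + t ^ 2 / 2|
      ≤ |exp t - (1 + t + t ^ 2 / 2)| + |t| * |exp t - 1 - t| := by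
        rw [hsplit, ← abs_mul]; exact abs_sub _ _
    _ ≤ |t| ^ 3 + |t| * t ^ 2 := by
        gcongr
        exacts [abs_exp_sub_quadratic_le ht, abs_exp_sub_one_sub_id_le ht]
    _ = 2 * |t| ^ 3 := by rw [← sq_abs]; ring

lemma abs_tail_integrand_add_le {ε x : ℝ} (hε : 0 < ε) (hx : ε ≤ x) :
    |exp (ε / x) * (x - ε) - x + ε ^ 2 / (2 * x)| ≤ 2 * ε ^ 3 / x ^ 2 := by
  have hx0 : 0 < x := hε.trans_le hx
  have ht : |ε / x| ≤ 1 := by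
    rw [abs_of_pos (div_pos hε hx0)]; exact (div_le_one hx0).mpr hx
  have hscale : exp (ε / x) * (x - ε) - x + ε ^ 2 / (2 * x) =
      x * (exp (ε / x) * (1 - ε / x) - 1 + (ε / x) ^ 2 / 2) := by
    field_simp
  calc |exp (ε / x) * (x - ε) - x + ε ^ 2 / (2 * x)|
      = x * |exp (ε / x) * (1 - ε / x) - 1 + (ε / x) ^ 2 / 2| := by
        rw [hscale, abs_mul, abs_of_pos hx0]
    _ ≤ x * (2 * |ε / x| ^ 3) := by gcongr; exact abs_exp_mul_one_sub_sub_le ht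
    _ = 2 * ε ^ 3 / x ^ 2 := by
        rw [abs_of_pos (div_pos hε hx0)]; field_simp

lemma forall_mem_uIcc_pos {a b : ℝ} (ha : 0 < a) (hb : 0 < b) : ∀ x ∈ uIcc a b, 0 < x :=
  fun _ hx => (lt_min ha hb).trans_le hx.1

lemma integral_div_sq_le {a b c : ℝ} (ha : 0 < a) (hab : a ≤ b) (hc : 0 ≤ c) :
    ∫ x in a..b, c / x ^ 2 ≤ c / a := by
  have h0 : (0 : ℝ) ∉ uIcc a b := fun h => (forall_mem_uIcc_pos ha (ha.trans_le hab) 0 h).false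
  have hzpow := integral_zpow (a := a) (b := b) (n := -2) (Or.inr ⟨by norm_num, h0⟩)
  simp only [zpow_neg, zpow_ofNat] at hzpow
  have hb : 0 ≤ b⁻¹ := inv_nonneg.mpr (ha.le.trans hab)
  simp_rw [div_eq_mul_inv c, intervalIntegral.integral_const_mul, hzpow]
  gcongr
  norm_num
  linarith

lemma integral_tail_eq {ε δ : ℝ} (hε : 0 < ε) (hεδ : ε ≤ δ) :
    ∫ x in ε..δ, (exp (ε / x) * (x - ε) - x) =
      ε ^ 2 / 2 * (log ε - log δ) +
        ∫ x in ε..δ, (exp (ε / x) * (x - ε) - x + ε ^ 2 / (2 * x)) := by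
  have hδ : 0 < δ := hε.trans_le hεδ
  have hpos := forall_mem_uIcc_pos hε hδ
  have hf : IntervalIntegrable (fun x => exp (ε / x) * (x - ε) - x) volume ε δ :=
    ContinuousOn.intervalIntegrable <| by
      fun_prop (disch := intro x hx; specialize hpos x hx; positivity)
  have hg : IntervalIntegrable (fun x => ε ^ 2 / (2 * x)) volume ε δ :=
    ContinuousOn.intervalIntegrable <| by
      fun_prop (disch := intro x hx; specialize hpos x hx; positivity)
  have hlog : ∫ x in ε..δ, ε ^ 2 / (2 * x) = ε ^ 2 / 2 * (log δ - log ε) := by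
    have hfun : (fun x : ℝ => ε ^ 2 / (2 * x)) = fun x => ε ^ 2 / 2 * x⁻¹ := by
      ext x; field_simp
    rw [hfun, intervalIntegral.integral_const_mul, integral_inv_of_pos hε hδ,
      log_div hδ.ne' hε.ne']
  rw [integral_add hf hg, hlog]
  ring

lemma abs_integral_tail_integrand_add_le {ε δ : ℝ} (hε : 0 < ε) (hεδ : ε ≤ δ) :
    |∫ x in ε..δ, (exp (ε / x) * (x - ε) - x + ε ^ 2 / (2 * x))| ≤ 2 * ε ^ 2 := by
  have hpos := forall_mem_uIcc_pos hε (hε.trans_le hεδ)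
  have hbound : IntervalIntegrable (fun x => 2 * ε ^ 3 / x ^ 2) volume ε δ :=
    ContinuousOn.intervalIntegrable <| by
      fun_prop (disch := intro x hx; specialize hpos x hx; positivity)
  calc _ ≤ ∫ x in ε..δ, 2 * ε ^ 3 / x ^ 2 := by
        rw [← Real.norm_eq_abs]
        exact norm_integral_le_of_norm_le hεδ
          (ae_of_all _ fun x hx => abs_tail_integrand_add_le hε hx.1.le) hbound
    _ ≤ 2 * ε ^ 3 / ε := integral_div_sq_le hε hεδ (by positivity)
    _ = 2 * ε ^ 2 := by field_simp

lemma isBigO_integral_tail_sub {δ : ℝ} (hδ : 0 < δ) :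
    (fun ε => (∫ x in ε..δ, (exp (ε / x) * (x - ε) - x)) - ε ^ 2 / 2 * log ε)
      =O[𝓝[>] 0] fun ε => ε ^ 2 := by
  refine IsBigO.of_bound (2 + |log δ| / 2) ?_
  filter_upwards [Ioc_mem_nhdsGT hδ] with ε hε
  have hR := abs_integral_tail_integrand_add_le hε.1 hε.2
  rw [integral_tail_eq hε.1 hε.2, Real.norm_eq_abs, Real.norm_eq_abs,
    abs_of_nonneg (sq_nonneg ε)]
  set R := ∫ x in ε..δ, (exp (ε / x) * (x - ε) - x + ε ^ 2 / (2 * x))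
  calc |ε ^ 2 / 2 * (log ε - log δ) + R - ε ^ 2 / 2 * log ε|
      = |R + ε ^ 2 / 2 * -log δ| := by congr 1; ring
    _ ≤ |R| + ε ^ 2 / 2 * |log δ| := by
        refine (abs_add_le _ _).trans_eq ?_
        rw [abs_mul, abs_neg, abs_of_nonneg (by positivity : (0 : ℝ) ≤ ε ^ 2 / 2)]
    _ ≤ (2 + |log δ| / 2) * ε ^ 2 := by linarith

lemma isLittleO_sq_sq_mul_log :
    (fun ε : ℝ => ε ^ 2) =o[𝓝[>] 0] fun ε => ε ^ 2 / 2 * log ε := by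
  have hlog : (fun _ : ℝ => (1 : ℝ)) =o[𝓝[>] 0] fun ε => log ε / 2 :=
    (isLittleO_one_left_iff ℝ).mpr
      (tendsto_abs_atBot_atTop.comp (tendsto_log_nhdsGT_zero.atBot_div_const two_pos))
  exact ((isBigO_refl (fun ε : ℝ => ε ^ 2) _).mul_isLittleO hlog).congr (fun _ => mul_one _)
    fun _ => by ring

theorem tail_integral_limit_one (δ : ℝ) (hδ : 0 < δ) :
    Tendsto (fun ε : ℝ => (1 / (ε ^ 2 * Real.log ε)) *
        ∫ x in ε..δ, (Real.exp (ε / x) * (x - ε) - x))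
      (nhdsWithin 0 (Ioi (0:ℝ))) (nhds (1/2)) := by
  have hequiv : (fun ε => ∫ x in ε..δ, (exp (ε / x) * (x - ε) - x))
      ~[𝓝[>] 0] fun ε => ε ^ 2 / 2 * log ε :=
    (isBigO_integral_tail_sub hδ).trans_isLittleO isLittleO_sq_sq_mul_log
  have hne : ∀ᶠ ε in 𝓝[>] (0 : ℝ), ε ^ 2 / 2 * log ε ≠ 0 := by
    filter_upwards [Ioo_mem_nhdsGT one_pos] with ε hε
    exact mul_ne_zero (by positivity [hε.1.ne']) (log_neg hε.1 hε.2).ne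
  have hratio := ((isEquivalent_iff_tendsto_one hne).mp hequiv).const_mul (1 / 2)
  rw [mul_one] at hratio
  refine hratio.congr fun ε => ?_
  simp only [Pi.div_apply]
  ring
end

section
/- For any fixed δ > 0, lim_{ε → 0+} (1/(ε² log ε)) · ∫_0^δ [exp(-ε/x)·(x + ε) - x] dx = 1/2. -/
open Filter Set intervalIntegral

open Real MeasureTheory Asymptotics Topology

/-! With `t = ε / x` the integrand is `x * (exp (-t) * (1 + t) - 1)`, which lies in `[-x, 0]`,
and for `x ≥ ε` the Taylor expansion of `exp (-t)` to third order turns it into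
`-ε ^ 2 / (2 * x) + O(ε ^ 3 / x ^ 2)`. So the integral over `(0, ε)` is `O(ε ^ 2)` and the one over
`(ε, δ)` is `ε ^ 2 / 2 * log (ε / δ) + O(ε ^ 2)`; the `O(ε ^ 2)` terms are negligible against
`ε ^ 2 * log ε`. -/

lemma abs_exp_neg_mul_one_add_sub_one_add_sq_div_two_le {t : ℝ} (ht : |t| ≤ 1) :
    |exp (-t) * (1 + t) - 1 + t ^ 2 / 2| ≤ |t| ^ 3 := by
  have hR : |exp (-t) - (1 - t + t ^ 2 / 2)| ≤ |t| ^ 3 * (2 / 9) := by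
    have h := Real.exp_bound (x := -t) (by rwa [abs_neg]) (n := 3) (by norm_num)
    norm_num [Finset.sum_range_succ, Nat.factorial] at h
    convert h using 3
    ring
  have h1t : |1 + t| ≤ 2 := (abs_add_le _ _).trans (by norm_num; linarith)
  have key : exp (-t) * (1 + t) - 1 + t ^ 2 / 2
      = (1 + t) * (exp (-t) - (1 - t + t ^ 2 / 2)) + t ^ 3 / 2 := by ring
  calc |exp (-t) * (1 + t) - 1 + t ^ 2 / 2|
      ≤ |1 + t| * |exp (-t) - (1 - t + t ^ 2 / 2)| + |t| ^ 3 / 2 := by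
        rw [key, ← abs_mul]
        refine (abs_add_le _ _).trans_eq ?_
        rw [abs_div, abs_pow, abs_two]
    _ ≤ 2 * (|t| ^ 3 * (2 / 9)) + |t| ^ 3 / 2 := by gcongr
    _ ≤ |t| ^ 3 := by nlinarith [pow_nonneg (abs_nonneg t) 3]

lemma exp_neg_mul_one_add_le_one (t : ℝ) : exp (-t) * (1 + t) ≤ 1 := by
  calc exp (-t) * (1 + t) ≤ exp (-t) * exp t := by gcongr; linarith [add_one_le_exp t]
    _ = 1 := by rw [← exp_add, neg_add_cancel, exp_zero]

noncomputable def tailIntegrand (ε x : ℝ) : ℝ := exp (-ε / x) * (x + ε) - x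

lemma isLittleO_mul_log_nhdsGT_zero (f : ℝ → ℝ) : f =o[𝓝[>] 0] fun x => f x * log x := by
  have hlog : (fun _ : ℝ => (1 : ℝ)) =o[𝓝[>] 0] log :=
    isLittleO_const_left.2 (Or.inr (tendsto_abs_atBot_atTop.comp tendsto_log_nhdsGT_zero))
  simpa using (isBigO_refl f _).mul_isLittleO hlog

section tailIntegrand

variable {ε x : ℝ}

lemma tailIntegrand_eq_mul (hx : x ≠ 0) :
    tailIntegrand ε x = x * (exp (-(ε / x)) * (1 + ε / x) - 1) := by
  rw [tailIntegrand, neg_div]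
  field_simp

lemma abs_tailIntegrand_le (hε : 0 ≤ ε) (hx : 0 < x) : |tailIntegrand ε x| ≤ x := by
  have hlow : 0 ≤ exp (-(ε / x)) * (1 + ε / x) := by positivity
  rw [tailIntegrand_eq_mul hx.ne', abs_mul, abs_of_pos hx, abs_of_nonpos (by
    linarith [exp_neg_mul_one_add_le_one (ε / x)])]
  nlinarith

lemma abs_tailIntegrand_add_le (hx : 0 < x) (hεx : |ε| ≤ x) :
    |tailIntegrand ε x + ε ^ 2 / 2 * x⁻¹| ≤ |ε| ^ 3 / x ^ 2 := by
  have ht : |ε / x| ≤ 1 := by rwa [abs_div, abs_of_pos hx, div_le_one hx]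
  have h := abs_exp_neg_mul_one_add_sub_one_add_sq_div_two_le ht
  have hsplit : tailIntegrand ε x + ε ^ 2 / 2 * x⁻¹
      = x * (exp (-(ε / x)) * (1 + ε / x) - 1 + (ε / x) ^ 2 / 2) := by
    rw [tailIntegrand_eq_mul hx.ne']
    field_simp
  calc |tailIntegrand ε x + ε ^ 2 / 2 * x⁻¹| ≤ x * |ε / x| ^ 3 := by
        rw [hsplit, abs_mul, abs_of_pos hx]; gcongr
    _ = |ε| ^ 3 / x ^ 2 := by
        rw [abs_div, abs_of_pos hx]
        field_simp

lemma continuousOn_tailIntegrand : ContinuousOn (tailIntegrand ε) (Ioi 0) := by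
  unfold tailIntegrand
  fun_prop (disch := exact fun x hx => ne_of_gt hx)

lemma measurable_tailIntegrand : Measurable (tailIntegrand ε) := by
  unfold tailIntegrand
  fun_prop

lemma intervalIntegrable_tailIntegrand (hε : 0 ≤ ε) {b : ℝ} (hb : 0 ≤ b) :
    IntervalIntegrable (tailIntegrand ε) volume 0 b := by
  rw [intervalIntegrable_iff_integrableOn_Ioc_of_le hb]
  refine Measure.integrableOn_of_bounded (M := b) measure_Ioc_lt_top.ne
    measurable_tailIntegrand.aestronglyMeasurable ?_
  filter_upwards [ae_restrict_mem measurableSet_Ioc] with x hx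
  exact (abs_tailIntegrand_le hε hx.1).trans hx.2


lemma abs_integral_zero_tailIntegrand_le (hε : 0 ≤ ε) :
    |∫ x in (0 : ℝ)..ε, tailIntegrand ε x| ≤ ε ^ 2 := by
  have h := norm_integral_le_of_norm_le_const (a := 0) (b := ε) (C := ε)
    (f := tailIntegrand ε) fun x hx => by
      rw [uIoc_of_le hε] at hx
      exact (abs_tailIntegrand_le hε hx.1).trans hx.2
  rwa [sub_zero, abs_of_nonneg hε, ← sq] at h

lemma abs_integral_tailIntegrand_sub_log_le {δ : ℝ} (hε : 0 < ε) (hεδ : ε ≤ δ) :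
    |(∫ x in ε..δ, tailIntegrand ε x) - ε ^ 2 / 2 * (log ε - log δ)| ≤ ε ^ 2 := by
  have hδ : 0 < δ := hε.trans_le hεδ
  have hpos : ∀ x ∈ uIcc ε δ, 0 < x := fun x hx =>
    hε.trans_le (by rw [uIcc_of_le hεδ] at hx; exact hx.1)
  have hzero : (0 : ℝ) ∉ uIcc ε δ := fun h => (hpos 0 h).false
  have hint_inv : IntervalIntegrable (fun x => ε ^ 2 / 2 * x⁻¹) volume ε δ :=
    (intervalIntegral.intervalIntegrable_inv (fun x hx => (hpos x hx).ne') continuousOn_id).const_mul _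
  have hint : IntervalIntegrable (tailIntegrand ε) volume ε δ :=
    (continuousOn_tailIntegrand.mono hpos).intervalIntegrable
  have hint_sq : IntervalIntegrable (fun x => ε ^ 3 / x ^ 2) volume ε δ :=
    (ContinuousOn.div continuousOn_const (continuousOn_pow 2)
      fun x hx => (pow_pos (hpos x hx) 2).ne').intervalIntegrable
  have hlog : ∫ x in ε..δ, ε ^ 2 / 2 * x⁻¹ = ε ^ 2 / 2 * (log δ - log ε) := by
    rw [intervalIntegral.integral_const_mul, integral_inv_of_pos hε hδ, log_div hδ.ne' hε.ne']
  have hsq : ∫ x in ε..δ, ε ^ 3 / x ^ 2 = ε ^ 3 * (ε⁻¹ - δ⁻¹) := by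
    simp_rw [div_eq_mul_inv, ← zpow_natCast, ← zpow_neg]
    rw [intervalIntegral.integral_const_mul, integral_zpow (Or.inr ⟨by norm_num, hzero⟩)]
    congr 1
    norm_num
    ring
  calc |(∫ x in ε..δ, tailIntegrand ε x) - ε ^ 2 / 2 * (log ε - log δ)|
      = ‖∫ x in ε..δ, (tailIntegrand ε x + ε ^ 2 / 2 * x⁻¹)‖ := by
        rw [integral_add hint hint_inv, hlog, Real.norm_eq_abs]
        congr 1
        ring
    _ ≤ ∫ x in ε..δ, ε ^ 3 / x ^ 2 := by
        refine norm_integral_le_of_norm_le hεδ (ae_of_all _ fun x hx => ?_) hint_sq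
        have h := abs_tailIntegrand_add_le (hε.trans hx.1) ((abs_of_pos hε).trans_le hx.1.le)
        rwa [abs_of_pos hε] at h
    _ = ε ^ 3 * (ε⁻¹ - δ⁻¹) := hsq
    _ ≤ ε ^ 3 * ε⁻¹ := by gcongr; linarith [inv_pos.2 hδ]
    _ = ε ^ 2 := by field_simp

lemma abs_integral_tailIntegrand_sub_log_le_two_mul {δ : ℝ} (hε : 0 < ε) (hεδ : ε ≤ δ) :
    |(∫ x in (0 : ℝ)..δ, tailIntegrand ε x) - ε ^ 2 / 2 * (log ε - log δ)| ≤ 2 * ε ^ 2 := by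
  have h0ε := intervalIntegrable_tailIntegrand hε.le hε.le
  have h0δ := intervalIntegrable_tailIntegrand hε.le (hε.le.trans hεδ)
  rw [← integral_add_adjacent_intervals h0ε (h0ε.symm.trans h0δ), add_sub_assoc]
  linarith [abs_add_le (∫ x in (0 : ℝ)..ε, tailIntegrand ε x)
    ((∫ x in ε..δ, tailIntegrand ε x) - ε ^ 2 / 2 * (log ε - log δ)),
    abs_integral_zero_tailIntegrand_le hε.le, abs_integral_tailIntegrand_sub_log_le hε hεδ]

end tailIntegrand

lemma isBigO_integral_tailIntegrand_sub {δ : ℝ} (hδ : 0 < δ) :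
    (fun ε => (∫ x in (0 : ℝ)..δ, tailIntegrand ε x) - ε ^ 2 / 2 * log ε)
      =O[𝓝[>] 0] fun ε => ε ^ 2 := by
  refine IsBigO.of_bound (2 + |log δ| / 2) ?_
  filter_upwards [Ioo_mem_nhdsGT hδ] with ε hε
  have h := abs_integral_tailIntegrand_sub_log_le_two_mul hε.1 hε.2.le
  rw [Real.norm_eq_abs, Real.norm_eq_abs, abs_of_nonneg (sq_nonneg ε)]
  calc |(∫ x in (0 : ℝ)..δ, tailIntegrand ε x) - ε ^ 2 / 2 * log ε|
      = |((∫ x in (0 : ℝ)..δ, tailIntegrand ε x) - ε ^ 2 / 2 * (log ε - log δ))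
          - ε ^ 2 / 2 * log δ| := by congr 1; ring
    _ ≤ 2 * ε ^ 2 + ε ^ 2 / 2 * |log δ| := by
        refine (abs_sub _ _).trans (add_le_add h ?_)
        rw [abs_mul, abs_of_nonneg (by positivity)]
    _ = (2 + |log δ| / 2) * ε ^ 2 := by ring

theorem tail_integral_limit_two (δ : ℝ) (hδ : 0 < δ) :
    Tendsto (fun ε : ℝ => (1 / (ε ^ 2 * Real.log ε)) *
        ∫ x in (0:ℝ)..δ, (Real.exp (-ε / x) * (x + ε) - x))
      (nhdsWithin 0 (Ioi (0:ℝ))) (nhds (1/2)) := by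
  have h := ((isBigO_integral_tailIntegrand_sub hδ).trans_isLittleO
    (isLittleO_mul_log_nhdsGT_zero fun ε => ε ^ 2)).tendsto_div_nhds_zero.const_add (1 / 2)
  rw [add_zero] at h
  refine h.congr' ?_
  filter_upwards [Ioo_mem_nhdsGT one_pos] with ε hε
  have hlog : log ε ≠ 0 := (log_neg hε.1 hε.2).ne
  have hε : ε ≠ 0 := hε.1.ne'
  simp only [tailIntegrand]
  field_simp
  ring
end

section
/- For 1 < κ < 2, the derivative of s ↦ s·(1 - s(κ-1))·B(s + κ(1-s), 2-κ) evaluated at s = 1/2 equals ((κ-1)(3-κ)/4)·π·tan((2-κ)π/2)·B((1+κ)/2, 2-κ), and this quantity is positive. -/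
/-!
Write `ψ = Γ'/Γ`, so that `∂ₓ B(x, y) = B(x, y) (ψ(x) - ψ(x + y))`. At `s = 1/2` the first argument
of `B` is `p = (1 + κ)/2`, and `p + (2 - κ) = 3 - p`. The recurrence `ψ(x + 1) = ψ(x) + 1/x`, used
twice, and the reflection formula `ψ(1 - p) - ψ(p) = π cot(π p)` turn `ψ(p) - ψ(3 - p)` into
`-π cot(π p) - 1/(1 - p) - 1/(2 - p)`. The two rational terms cancel against the derivative of the
polynomial factor, leaving `(κ - 1)(3 - κ)/4 · π cot(π p) · B(p, 2 - κ)`, and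
`cot(π p) = tan((2 - κ)π/2)` lies in `(0, ∞)` for `1 < κ < 2`.
-/

noncomputable def betaFn (x y : ℝ) : ℝ := Real.Gamma x * Real.Gamma y / Real.Gamma (x + y)

open Real Topology

theorem ne_neg_natCast_of_neg_one_lt {x : ℝ} (h1 : -1 < x) (h0 : x ≠ 0) : ∀ n : ℕ, x ≠ -n := by
  rintro (_ | n) h
  · simp_all
  · push_cast at h
    linarith [n.cast_nonneg (α := ℝ)]

theorem logDeriv_Gamma_add_one {x : ℝ} (hx : ∀ n : ℕ, x ≠ -n) :
    logDeriv Gamma (x + 1) = logDeriv Gamma x + x⁻¹ := by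
  have hx0 : x ≠ 0 := by simpa using hx 0
  have hx1 : ∀ n : ℕ, x + 1 ≠ -n := fun n h => hx (n + 1) (by push_cast; linarith)
  have hshift : logDeriv (fun y => Gamma (y + 1)) x = logDeriv Gamma (x + 1) := by
    simpa [Function.comp_def] using logDeriv_comp (g := fun y => y + 1)
      (differentiableAt_Gamma hx1) (differentiableAt_id.add_const 1)
  have hrec : (fun y => Gamma (y + 1)) =ᶠ[𝓝 x] fun y => y * Gamma y := by
    filter_upwards [isOpen_ne.mem_nhds hx0] with y hy using Gamma_add_one hy
  rw [← hshift, (logDeriv_congr_nhds hrec).eq_of_nhds,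
    logDeriv_mul (f := fun y => y) x hx0 (Gamma_ne_zero hx) differentiableAt_fun_id
      (differentiableAt_Gamma hx), logDeriv_id', add_comm, one_div]

/-- The logarithmic derivative of Euler's reflection formula `Γ(x) Γ(1 - x) = π / sin (π x)`. -/
theorem logDeriv_Gamma_one_sub_sub_logDeriv_Gamma {x : ℝ} (hx : ∀ n : ℕ, x ≠ -n)
    (hx' : ∀ n : ℕ, 1 - x ≠ -n) :
    logDeriv Gamma (1 - x) - logDeriv Gamma x = π * cot (π * x) := by
  have hsin : sin (π * x) ≠ 0 := by
    intro h
    apply mul_ne_zero (Gamma_ne_zero hx) (Gamma_ne_zero hx')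
    rw [Gamma_mul_Gamma_one_sub, h, div_zero]
  have hd' : DifferentiableAt ℝ (fun y => Gamma (1 - y)) x :=
    (differentiableAt_Gamma hx').comp x ((differentiableAt_const 1).sub differentiableAt_id)
  have hflip : logDeriv (fun y => Gamma (1 - y)) x = -logDeriv Gamma (1 - x) := by
    simpa [Function.comp_def] using logDeriv_comp (g := fun y => 1 - y)
      (differentiableAt_Gamma hx') ((differentiableAt_const 1).sub differentiableAt_id)
  have hsd : DifferentiableAt ℝ (fun y => sin (π * y)) x := by fun_prop
  have hlogsin : logDeriv (fun y => sin (π * y)) x = cot (π * x) * π := by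
    simpa [Function.comp_def] using logDeriv_comp (g := fun y => π * y) (x := x)
      differentiableAt_sin (differentiableAt_id.const_mul π)
  have hreflect : logDeriv (fun y => Gamma y * Gamma (1 - y)) x
      = logDeriv (fun y => π / sin (π * y)) x := by
    simp only [Gamma_mul_Gamma_one_sub]
  rw [logDeriv_mul (g := fun y => Gamma (1 - y)) x (Gamma_ne_zero hx) (Gamma_ne_zero hx')
      (differentiableAt_Gamma hx) hd', hflip,
    logDeriv_div x pi_ne_zero hsin (differentiableAt_const _) hsd, hlogsin,
    logDeriv_const, Pi.zero_apply] at hreflect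
  linarith

theorem logDeriv_Gamma_sub_logDeriv_Gamma_three_sub {x : ℝ} (hx : ∀ n : ℕ, x ≠ -n)
    (hx' : ∀ n : ℕ, 1 - x ≠ -n) :
    logDeriv Gamma x - logDeriv Gamma (3 - x)
      = -(π * cot (π * x)) - (1 - x)⁻¹ - (2 - x)⁻¹ := by
  have hx'' : ∀ n : ℕ, 1 - x + 1 ≠ -n := fun n h => hx' (n + 1) (by push_cast; linarith)
  have hreflect := logDeriv_Gamma_one_sub_sub_logDeriv_Gamma hx hx'
  rw [show 3 - x = 1 - x + 1 + 1 by ring, logDeriv_Gamma_add_one hx'',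
    logDeriv_Gamma_add_one hx', show 1 - x + 1 = 2 - x by ring]
  linarith

theorem hasDerivAt_betaFn_left {x y : ℝ} (hx : ∀ n : ℕ, x ≠ -n) (hxy : ∀ n : ℕ, x + y ≠ -n) :
    HasDerivAt (fun t => betaFn t y)
      (betaFn x y * (logDeriv Gamma x - logDeriv Gamma (x + y))) x := by
  refine (((differentiableAt_Gamma hx).hasDerivAt.mul_const (Gamma y)).fun_div
    ((differentiableAt_Gamma hxy).hasDerivAt.comp_add_const x y)
    (Gamma_ne_zero hxy)).congr_deriv ?_
  have := Gamma_ne_zero hx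
  have := Gamma_ne_zero hxy
  rw [betaFn, logDeriv_apply, logDeriv_apply]
  field_simp

theorem betaFn_pos {x y : ℝ} (hx : 0 < x) (hy : 0 < y) : 0 < betaFn x y :=
  div_pos (mul_pos (Gamma_pos_of_pos hx) (Gamma_pos_of_pos hy))
    (Gamma_pos_of_pos (add_pos hx hy))

theorem hasDerivAt_mul_betaFn_affine {κ y s : ℝ} (ha : ∀ n : ℕ, s + κ * (1 - s) ≠ -n)
    (hay : ∀ n : ℕ, s + κ * (1 - s) + y ≠ -n) :
    HasDerivAt (fun s => s * (1 - s * (κ - 1)) * betaFn (s + κ * (1 - s)) y)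
      ((1 - 2 * s * (κ - 1)) * betaFn (s + κ * (1 - s)) y + s * (1 - s * (κ - 1)) *
        (betaFn (s + κ * (1 - s)) y * (logDeriv Gamma (s + κ * (1 - s))
          - logDeriv Gamma (s + κ * (1 - s) + y)) * (1 - κ))) s := by
  have hpoly : HasDerivAt (fun s : ℝ => s * (1 - s * (κ - 1))) (1 - 2 * s * (κ - 1)) s := by
    refine ((hasDerivAt_id' _).fun_mul
      ((hasDerivAt_const _ 1).fun_sub ((hasDerivAt_id' _).mul_const (κ - 1)))).congr_deriv ?_
    ring
  have hinner : HasDerivAt (fun s : ℝ => s + κ * (1 - s)) (1 - κ) s := by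
    refine ((hasDerivAt_id' _).fun_add
      (((hasDerivAt_const _ 1).fun_sub (hasDerivAt_id' _)).const_mul κ)).congr_deriv ?_
    ring
  exact hpoly.fun_mul ((hasDerivAt_betaFn_left ha hay).comp_of_eq s hinner rfl)

theorem deriv_at_half_kappa_gt_one (κ : ℝ) (hκ1 : 1 < κ) (hκ2 : κ < 2) :
    deriv (fun s : ℝ => s * (1 - s * (κ - 1)) * betaFn (s + κ * (1 - s)) (2 - κ)) (1/2)
      = ((κ - 1) * (3 - κ) / 4) * Real.pi * Real.tan ((2 - κ) / 2 * Real.pi) *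
        betaFn ((1 + κ) / 2) (2 - κ) ∧
    0 < ((κ - 1) * (3 - κ) / 4) * Real.pi * Real.tan ((2 - κ) / 2 * Real.pi) *
        betaFn ((1 + κ) / 2) (2 - κ) := by
  set p := (1 + κ) / 2 with hp
  have hval : (1 / 2 : ℝ) + κ * (1 - 1 / 2) = p := by rw [hp]; ring
  have hpc : p + (2 - κ) = 3 - p := by rw [hp]; ring
  have hp_pole : ∀ n : ℕ, p ≠ -n := ne_neg_natCast_of_neg_one_lt (by linarith) (by linarith)
  have hq_pole : ∀ n : ℕ, 1 - p ≠ -n := ne_neg_natCast_of_neg_one_lt (by linarith) (by linarith)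
  have hpc_pole : ∀ n : ℕ, p + (2 - κ) ≠ -n :=
    ne_neg_natCast_of_neg_one_lt (by linarith) (by linarith)
  have htan : tan ((2 - κ) / 2 * π) = cot (π * p) := by
    rw [show (2 - κ) / 2 * π = π / 2 - π * p + π by rw [hp]; ring, tan_add_pi,
      tan_pi_div_two_sub, tan_inv_eq_cot]
  have hderiv := hasDerivAt_mul_betaFn_affine (s := 1 / 2) (hval ▸ hp_pole) (hval ▸ hpc_pole)
  refine ⟨hderiv.deriv.trans ?_, ?_⟩
  · have hq : 1 - p ≠ 0 := by linarith
    have hq' : 2 - p ≠ 0 := by linarith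
    rw [hval, hpc, logDeriv_Gamma_sub_logDeriv_Gamma_three_sub hp_pole hq_pole, ← htan]
    field_simp
    rw [hp]
    ring
  · have := tan_pos_of_pos_of_lt_pi_div_two (x := (2 - κ) / 2 * π)
      (by nlinarith [pi_pos]) (by nlinarith [pi_pos])
    have := betaFn_pos (x := p) (y := 2 - κ) (by linarith) (by linarith)
    have : 0 < (κ - 1) * (3 - κ) := by nlinarith
    positivity
end

section
/- The function h(t) := 2t - 1 + t(1-t)·(ψ(1+t) - ψ(1)) is strictly monotonically increasing on (0, 1/2), satisfies h(0) = -1 < 0 and h(1/2) > 0, and hence has a unique zero t₀ in (0, 1/2). -/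
/-!
`ψ = (log Γ)'` is strictly increasing on `(0, ∞)`: it is the derivative of a convex function, and
the recurrence `ψ (x + 1) = ψ x + 1 / x` upgrades monotone to strictly monotone. Being a
strictly increasing derivative, `ψ` is continuous by Darboux's theorem. On `(0, 1/2)`, `h` is then
the sum of the strictly increasing `2t - 1` and the product of the nonnegative increasing factors
`t (1 - t)` and `ψ (1 + t) - ψ 1`; the intermediate value theorem gives the zero, strict
monotonicity its uniqueness.
-/

/-- The digamma function `ψ = (log ∘ Γ)'`. -/
noncomputable def digamma (x : ℝ) : ℝ := deriv (fun y => Real.log (Real.Gamma y)) x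

open Real Set

lemma differentiableAt_log_Gamma {x : ℝ} (hx : 0 < x) :
    DifferentiableAt ℝ (fun y => log (Gamma y)) x := by
  have hne : ∀ m : ℕ, x ≠ -m := fun m => by
    have : (0 : ℝ) ≤ m := m.cast_nonneg
    linarith
  exact (differentiableAt_Gamma hne).log (Gamma_ne_zero hne)

lemma hasDerivAt_log_Gamma {x : ℝ} (hx : 0 < x) :
    HasDerivAt (fun y => log (Gamma y)) (digamma x) x :=
  (differentiableAt_log_Gamma hx).hasDerivAt

lemma digamma_monotoneOn : MonotoneOn digamma (Ioi 0) :=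
  convexOn_log_Gamma.monotoneOn_deriv fun _ hx => differentiableAt_log_Gamma hx

lemma digamma_add_one {x : ℝ} (hx : 0 < x) : digamma (x + 1) = digamma x + x⁻¹ := by
  have hlog : (fun y => log (Gamma (y + 1))) =ᶠ[nhds x] fun y => log (Gamma y) + log y := by
    filter_upwards [eventually_gt_nhds hx] with y hy
    rw [Gamma_add_one hy.ne', log_mul hy.ne' (Gamma_pos_of_pos hy).ne', add_comm]
  have hshift : HasDerivAt (fun y => log (Gamma (y + 1))) (digamma (x + 1)) x :=
    (hasDerivAt_log_Gamma (by linarith)).comp_add_const x 1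
  exact hshift.unique
    (((hasDerivAt_log_Gamma hx).add (hasDerivAt_log hx.ne')).congr_of_eventuallyEq hlog)

lemma digamma_strictMonoOn : StrictMonoOn digamma (Ioi 0) := by
  intro x (hx : 0 < x) y _ hxy
  have hy : 0 < y := hx.trans hxy
  have hshift : digamma (x + 1) ≤ digamma (y + 1) :=
    digamma_monotoneOn (by simp only [mem_Ioi]; linarith) (by simp only [mem_Ioi]; linarith)
      (by linarith)
  rw [digamma_add_one hx, digamma_add_one hy] at hshift
  linarith [inv_strictAntiOn (mem_Ioi.2 hx) (mem_Ioi.2 hy) hxy]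

lemma ordConnected_image_digamma : OrdConnected (digamma '' Ioi 0) :=
  ordConnected_Ioi.image_deriv fun _ hx => differentiableAt_log_Gamma hx

lemma digamma_continuousAt {x : ℝ} (hx : 0 < x) : ContinuousAt digamma x := by
  have hx2 : 0 < 2 * x := by linarith
  refine digamma_strictMonoOn.continuousAt_of_image_mem_nhds (Ioi_mem_nhds hx) ?_
  refine Filter.mem_of_superset (Icc_mem_nhds ?_ ?_) (ordConnected_image_digamma.out
    (mem_image_of_mem _ (mem_Ioi.2 (half_pos hx))) (mem_image_of_mem _ (mem_Ioi.2 hx2)))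
  · exact digamma_strictMonoOn (mem_Ioi.2 (half_pos hx)) hx (half_lt_self hx)
  · exact digamma_strictMonoOn hx hx2 (by linarith)

lemma digamma_continuousOn : ContinuousOn digamma (Ioi 0) :=
  fun _ hx => (digamma_continuousAt hx).continuousWithinAt

lemma digamma_one_add_sub_monotoneOn :
    MonotoneOn (fun t => digamma (1 + t) - digamma 1) (Ici 0) := by
  intro s (hs : 0 ≤ s) t (ht : 0 ≤ t) hst
  have := digamma_monotoneOn (by simp only [mem_Ioi]; linarith)
    (by simp only [mem_Ioi]; linarith) (by linarith : 1 + s ≤ 1 + t)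
  simpa using this

lemma digamma_one_add_sub_nonneg {t : ℝ} (ht : 0 ≤ t) : 0 ≤ digamma (1 + t) - digamma 1 := by
  simpa using digamma_one_add_sub_monotoneOn self_mem_Ici (mem_Ici.2 ht) ht

lemma existsUnique_zero_of_strictMonoOn {f : ℝ → ℝ} {a b : ℝ} (hab : a ≤ b)
    (hf : ContinuousOn f (Icc a b)) (hmono : StrictMonoOn f (Ioo a b)) (ha : f a < 0)
    (hb : 0 < f b) : ∃! x, x ∈ Ioo a b ∧ f x = 0 := by
  obtain ⟨x, hx, hfx⟩ := intermediate_value_Ioo hab hf ⟨ha, hb⟩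
  exact ⟨x, ⟨hx, hfx⟩, fun y ⟨hy, hfy⟩ => hmono.injOn hy hx (hfy.trans hfx.symm)⟩

theorem unique_zero_of_h :
    let h : ℝ → ℝ := fun t => 2 * t - 1 + t * (1 - t) * (digamma (1 + t) - digamma 1)
    StrictMonoOn h (Set.Ioo (0:ℝ) (1/2)) ∧
    h 0 = -1 ∧
    0 < h (1/2) ∧
    ∃! t₀ : ℝ, t₀ ∈ Set.Ioo (0:ℝ) (1/2) ∧ h t₀ = 0 := by
  intro h
  have hquad : MonotoneOn (fun t : ℝ => t * (1 - t)) (Ioo 0 (1/2)) :=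
    fun s _ t ht hst => by nlinarith [ht.2]
  have hlin : StrictMonoOn (fun t : ℝ => 2 * t - 1) (Ioo 0 (1/2)) :=
    fun s _ t _ hst => by linarith
  have hmono : StrictMonoOn h (Ioo 0 (1/2)) :=
    hlin.add_monotone
      (hquad.mul (digamma_one_add_sub_monotoneOn.mono fun t ht => le_of_lt ht.1)
        (fun t ht => mul_nonneg ht.1.le (by linarith [ht.2])) fun t ht => digamma_one_add_sub_nonneg ht.1.le)
  have h0 : h 0 = -1 := by simp [h]
  have hhalf : 0 < h (1/2) := by
    have : digamma 1 < digamma (1 + 1/2) :=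
      digamma_strictMonoOn (mem_Ioi.2 one_pos) (by norm_num) (by norm_num)
    simp only [h]
    linarith
  have hcont : ContinuousOn h (Icc 0 (1/2)) := by
    have : ContinuousOn (fun t => digamma (1 + t)) (Icc (0:ℝ) (1/2)) :=
      digamma_continuousOn.comp (by fun_prop) fun t ht => by
        simp only [mem_Ioi]
        linarith [ht.1]
    fun_prop
  exact ⟨hmono, h0, hhalf, existsUnique_zero_of_strictMonoOn (by norm_num) hcont hmono
    (by rw [h0]; norm_num) hhalf⟩
end

section
/- For 1 < κ < 2, the quantity (3 - 2κ) + (2-κ)(κ-1)·(ψ(3-κ) - ψ(1)) is nonnegative if and only if 1 < κ ≤ 2 - t₀, where t₀ ∈ (0, 1/2) is the unique solution of 2t₀ + t₀(1-t₀)(ψ(1+t₀) - ψ(1)) = 1. -/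
lemma digamma_mono {a b : ℝ} (ha : 0 < a) (hab : a ≤ b) : digamma a ≤ digamma b := by
  have hder : ∀ x ∈ Set.Ioi (0:ℝ), DifferentiableAt ℝ (Real.log ∘ Real.Gamma) x := by
    intro x hx
    exact (Real.differentiableAt_Gamma (fun m => by simp at hx; nlinarith [Nat.cast_nonneg (α := ℝ) m])).log
      (Real.Gamma_ne_zero (fun m => by simp at hx; nlinarith [Nat.cast_nonneg (α := ℝ) m]))
  have := (Real.convexOn_log_Gamma.monotoneOn_deriv hder) (Set.mem_Ioi.mpr ha)
    (Set.mem_Ioi.mpr (lt_of_lt_of_le ha hab)) hab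
  simpa [digamma, Function.comp_def] using this

theorem nonneg_iff_kappa_le (t₀ : ℝ) (ht₀ : t₀ ∈ Set.Ioo (0:ℝ) (1/2))
    (ht₀eq : 2 * t₀ + t₀ * (1 - t₀) * (digamma (1 + t₀) - digamma 1) = 1)
    (κ : ℝ) (hκ1 : 1 < κ) (hκ2 : κ < 2) :
    0 ≤ (3 - 2 * κ) + (2 - κ) * (κ - 1) * (digamma (3 - κ) - digamma 1) ↔ κ ≤ 2 - t₀ := by
  obtain ⟨ht0pos, ht0half⟩ := ht₀
  set t : ℝ := 2 - κ with ht
  have htpos : 0 < t := by simp [ht]; linarith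
  have ht1 : t < 1 := by simp [ht]; linarith
  have hrw : 3 - κ = 1 + t := by ring
  have g0 : ∀ s : ℝ, 0 ≤ s → 0 ≤ digamma (1 + s) - digamma 1 :=
    fun s hs => sub_nonneg.mpr (digamma_mono one_pos (by linarith))
  have gmono : ∀ s u : ℝ, 0 ≤ s → s ≤ u → digamma (1 + s) - digamma 1 ≤ digamma (1 + u) - digamma 1 :=
    fun s u hs hsu => by
      have := digamma_mono (a := 1 + s) (b := 1 + u) (by linarith) (by linarith)
      linarith
  have key : (3 - 2 * κ) + (2 - κ) * (κ - 1) * (digamma (3 - κ) - digamma 1)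
      = (2 * t - 1) + t * (1 - t) * (digamma (1 + t) - digamma 1) := by
    rw [hrw]; ring
  rw [key]
  constructor
  · intro h
    by_contra hc
    push_neg at hc
    have htlt : t < t₀ := by simp [ht]; linarith
    -- h(t) < h(t₀) = 0
    have h1 : t * (1 - t) ≤ t₀ * (1 - t₀) := by nlinarith
    have h2 : digamma (1 + t) - digamma 1 ≤ digamma (1 + t₀) - digamma 1 :=
      gmono t t₀ htpos.le htlt.le
    have h3 : t * (1 - t) * (digamma (1 + t) - digamma 1) ≤ t₀ * (1 - t₀) * (digamma (1 + t₀) - digamma 1) :=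
      mul_le_mul h1 h2 (g0 t htpos.le) (by nlinarith)
    linarith
  · intro h
    have htge : t₀ ≤ t := by simp [ht] at *; linarith
    rcases le_or_gt t (1/2) with hhalf | hhalf
    · have h1 : t₀ * (1 - t₀) ≤ t * (1 - t) := by nlinarith
      have h2 : digamma (1 + t₀) - digamma 1 ≤ digamma (1 + t) - digamma 1 :=
        gmono t₀ t ht0pos.le htge
      have h3 : t₀ * (1 - t₀) * (digamma (1 + t₀) - digamma 1) ≤ t * (1 - t) * (digamma (1 + t) - digamma 1) :=
        mul_le_mul h1 h2 (g0 t₀ ht0pos.le) (by nlinarith)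
      linarith
    · have hg := g0 t htpos.le
      nlinarith [mul_nonneg (mul_nonneg htpos.le (by linarith : (0:ℝ) ≤ 1 - t)) hg]
end

section
/- For 1 < κ < 2, the function s ↦ log((1 - s(κ-1))/(1-s)) + log B(s + κ(1-s), 2-κ) is convex on (0,1); consequently the function F(s) = (1-s(κ-1))B(s+κ(1-s),2-κ)/(1-s) + (1-(1-s)(κ-1))B((1-s)+κs,2-κ)/s is convex on (0,1) and, being invariant under s ↦ 1-s, attains its minimum at s = 1/2. -/
/-! Since `Γ(y + 1) = y Γ(y)`, the summand `(1 - s(κ-1)) B(s + κ(1-s), 2-κ) / (1-s)` equals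
`(κ-1) B((1-s)(κ-1), 2-κ)`. Hence both claims reduce to the log-convexity of `t ↦ B(t, c)`,
which is Hölder's inequality applied to Euler's integral `∫₀¹ x^(t-1) (1-x)^(c-1) dx`. The
function `F(s) = (κ-1) (B((1-s)(κ-1), 2-κ) + B(s(κ-1), 2-κ))` is then convex and invariant
under `s ↦ 1 - s`, so its minimum on the segment `[s, 1-s]` is taken at the midpoint `1/2`. -/

open Set MeasureTheory Real

theorem integral_rpow_mul_rpow_le {α : Type*} [MeasurableSpace α] {μ : Measure α}
    {f g : α → ℝ} (hf₀ : 0 ≤ᵐ[μ] f) (hg₀ : 0 ≤ᵐ[μ] g) (hf : Integrable f μ) (hg : Integrable g μ)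
    {p q : ℝ} (hp : 0 ≤ p) (hq : 0 ≤ q) (hpq : p + q = 1) :
    ∫ x, f x ^ p * g x ^ q ∂μ ≤ (∫ x, f x ∂μ) ^ p * (∫ x, g x ∂μ) ^ q := by
  have hfg₀ : 0 ≤ᵐ[μ] fun x => f x ^ p * g x ^ q := by
    filter_upwards [hf₀, hg₀] with x hfx hgx
    exact mul_nonneg (rpow_nonneg hfx p) (rpow_nonneg hgx q)
  have hmeas : AEStronglyMeasurable (fun x => f x ^ p * g x ^ q) μ :=
    ((hf.aemeasurable.pow_const p).mul (hg.aemeasurable.pow_const q)).aestronglyMeasurable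
  have hIf := integral_nonneg_of_ae hf₀
  have hIg := integral_nonneg_of_ae hg₀
  rw [integral_eq_lintegral_of_nonneg_ae hfg₀ hmeas,
    ← ENNReal.ofReal_le_ofReal_iff (mul_nonneg (rpow_nonneg hIf p) (rpow_nonneg hIg q)),
    ENNReal.ofReal_mul (rpow_nonneg hIf p), ← ENNReal.ofReal_rpow_of_nonneg hIf hp,
    ← ENNReal.ofReal_rpow_of_nonneg hIg hq,
    ofReal_integral_eq_lintegral_ofReal hf hf₀, ofReal_integral_eq_lintegral_ofReal hg hg₀]
  calc ENNReal.ofReal (∫⁻ x, ENNReal.ofReal (f x ^ p * g x ^ q) ∂μ).toReal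
      ≤ ∫⁻ x, ENNReal.ofReal (f x ^ p * g x ^ q) ∂μ := ENNReal.ofReal_toReal_le
    _ = ∫⁻ x, ENNReal.ofReal (f x) ^ p * ENNReal.ofReal (g x) ^ q ∂μ := by
        refine lintegral_congr_ae ?_
        filter_upwards [hf₀, hg₀] with x hfx hgx
        rw [ENNReal.ofReal_mul (rpow_nonneg hfx p), ENNReal.ofReal_rpow_of_nonneg hfx hp,
          ENNReal.ofReal_rpow_of_nonneg hgx hq]
    _ ≤ _ := ENNReal.lintegral_mul_norm_pow_le hf.aemeasurable.ennreal_ofReal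
        hg.aemeasurable.ennreal_ofReal hp hq hpq

theorem ConvexOn.comp_mul_add {f : ℝ → ℝ} {S T : Set ℝ} (hf : ConvexOn ℝ S f)
    (hT : Convex ℝ T) {p q : ℝ} (hmaps : MapsTo (fun x => p * x + q) T S) :
    ConvexOn ℝ T fun x => f (p * x + q) := by
  refine ⟨hT, fun x hx y hy a b ha hb hab => ?_⟩
  have harg : p * (a • x + b • y) + q = a • (p * x + q) + b • (p * y + q) := by
    simp only [smul_eq_mul]
    linear_combination (-q) * hab
  dsimp only
  rw [harg]
  exact hf.2 (hmaps hx) (hmaps hy) ha hb hab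

theorem ConvexOn.apply_half_le_of_symm {f : ℝ → ℝ} (hf : ConvexOn ℝ (Ioo 0 1) f)
    (hsymm : ∀ s ∈ Ioo (0 : ℝ) 1, f (1 - s) = f s) {s : ℝ} (hs : s ∈ Ioo (0 : ℝ) 1) :
    f (1 / 2) ≤ f s := by
  have hs' : 1 - s ∈ Ioo (0 : ℝ) 1 := ⟨sub_pos.2 hs.2, sub_lt_self 1 hs.1⟩
  have hhalf : (1 / 2 : ℝ) ∈ segment ℝ s (1 - s) :=
    ⟨1 / 2, 1 / 2, by norm_num, by norm_num, by norm_num, by simp only [smul_eq_mul]; ring⟩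
  simpa [hsymm s hs] using hf.le_on_segment hs hs' hhalf

lemma betaFn_pos_s12 {t c : ℝ} (ht : 0 < t) (hc : 0 < c) : 0 < betaFn t c :=
  div_pos (mul_pos (Gamma_pos_of_pos ht) (Gamma_pos_of_pos hc)) (Gamma_pos_of_pos (add_pos ht hc))

lemma add_mul_betaFn_add_one {y c : ℝ} (hy : y ≠ 0) (hyc : y + c ≠ 0) :
    (y + c) * betaFn (y + 1) c = y * betaFn y c := by
  rw [betaFn, betaFn, add_right_comm, Gamma_add_one hy, Gamma_add_one hyc]
  -- `Γ` vanishes at the nonpositive integers; there both sides are `0` since `x / 0 = 0`.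
  rcases eq_or_ne (Gamma (y + c)) 0 with h | h
  · simp [h]
  · field_simp

lemma betaIntegrand_nonneg {x : ℝ} (hx : x ∈ Icc (0 : ℝ) 1) (u v : ℝ) :
    0 ≤ x ^ (u - 1) * (1 - x) ^ (v - 1) :=
  mul_nonneg (rpow_nonneg hx.1 _) (rpow_nonneg (sub_nonneg.2 hx.2) _)

lemma ofReal_betaIntegrand {x : ℝ} (hx : x ∈ Icc (0 : ℝ) 1) (u v : ℝ) :
    ((x ^ (u - 1) * (1 - x) ^ (v - 1) : ℝ) : ℂ) =
      (x : ℂ) ^ ((u : ℂ) - 1) * (1 - (x : ℂ)) ^ ((v : ℂ) - 1) := by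
  rw [Complex.ofReal_mul, Complex.ofReal_cpow hx.1, Complex.ofReal_cpow (sub_nonneg.2 hx.2)]
  push_cast; rfl

lemma intervalIntegrable_betaIntegrand {u v : ℝ} (hu : 0 < u) (hv : 0 < v) :
    IntervalIntegrable (fun x : ℝ => x ^ (u - 1) * (1 - x) ^ (v - 1)) volume 0 1 := by
  refine (Complex.betaIntegral_convergent (u := u) (v := v) (by simpa) (by simpa)).norm.congr
    fun x hx => ?_
  have hx' : x ∈ Icc (0 : ℝ) 1 := Ioc_subset_Icc_self (uIoc_of_le (zero_le_one' ℝ) ▸ hx)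
  rw [← ofReal_betaIntegrand hx', Complex.norm_real, norm_of_nonneg (betaIntegrand_nonneg hx' u v)]

lemma betaFn_eq_integral {t c : ℝ} (ht : 0 < t) (hc : 0 < c) :
    betaFn t c = ∫ x in (0 : ℝ)..1, x ^ (t - 1) * (1 - x) ^ (c - 1) := by
  have h := Complex.betaIntegral_eq_Gamma_mul_div t c (by simpa) (by simpa)
  rw [Complex.betaIntegral, ← intervalIntegral.integral_congr fun x hx =>
      ofReal_betaIntegrand (uIcc_of_le (zero_le_one' ℝ) ▸ hx) t c,
    intervalIntegral.integral_ofReal, ← Complex.ofReal_add, Complex.Gamma_ofReal,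
    Complex.Gamma_ofReal, Complex.Gamma_ofReal] at h
  exact_mod_cast h.symm

lemma betaFn_mul_add_mul_le_rpow_mul_rpow {c s t a b : ℝ} (hc : 0 < c) (hs : 0 < s) (ht : 0 < t)
    (ha : 0 ≤ a) (hb : 0 ≤ b) (hab : a + b = 1) :
    betaFn (a * s + b * t) c ≤ betaFn s c ^ a * betaFn t c ^ b := by
  have hst : 0 < a * s + b * t := convex_Ioi (0 : ℝ) hs ht ha hb hab
  have hIoc : ∀ u : ℝ,
      0 ≤ᵐ[volume.restrict (Ioc (0 : ℝ) 1)] fun x => x ^ (u - 1) * (1 - x) ^ (c - 1) :=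
    fun u => ae_restrict_of_forall_mem measurableSet_Ioc fun x hx =>
      betaIntegrand_nonneg (Ioc_subset_Icc_self hx) u c
  simp only [betaFn_eq_integral hst hc, betaFn_eq_integral hs hc, betaFn_eq_integral ht hc,
    intervalIntegral.integral_of_le zero_le_one]
  calc ∫ x in Ioc (0 : ℝ) 1, x ^ (a * s + b * t - 1) * (1 - x) ^ (c - 1)
      = ∫ x in Ioc (0 : ℝ) 1,
          (x ^ (s - 1) * (1 - x) ^ (c - 1)) ^ a * (x ^ (t - 1) * (1 - x) ^ (c - 1)) ^ b := by
        refine setIntegral_congr_fun measurableSet_Ioc fun x hx => ?_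
        have h1x : 0 ≤ 1 - x := sub_nonneg.2 hx.2
        rw [mul_rpow (rpow_nonneg hx.1.le _) (rpow_nonneg h1x _),
          mul_rpow (rpow_nonneg hx.1.le _) (rpow_nonneg h1x _), mul_mul_mul_comm,
          ← rpow_add' (rpow_nonneg h1x _) (by rw [hab]; exact one_ne_zero), hab, rpow_one,
          ← rpow_mul hx.1.le, ← rpow_mul hx.1.le, ← rpow_add hx.1]
        congr 2
        linear_combination hab
    _ ≤ _ := integral_rpow_mul_rpow_le (hIoc s) (hIoc t)
        (intervalIntegrable_betaIntegrand hs hc).1 (intervalIntegrable_betaIntegrand ht hc).1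
        ha hb hab

lemma convexOn_log_betaFn {c : ℝ} (hc : 0 < c) :
    ConvexOn ℝ (Ioi 0) fun t => log (betaFn t c) := by
  refine ⟨convex_Ioi 0, fun s hs t ht a b ha hb hab => ?_⟩
  have hs' : 0 < s := hs
  have ht' : 0 < t := ht
  calc log (betaFn (a * s + b * t) c) ≤ log (betaFn s c ^ a * betaFn t c ^ b) :=
        log_le_log (betaFn_pos_s12 (convex_Ioi 0 hs ht ha hb hab) hc)
          (betaFn_mul_add_mul_le_rpow_mul_rpow hc hs' ht' ha hb hab)
    _ = a * log (betaFn s c) + b * log (betaFn t c) := by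
        have hBs := betaFn_pos_s12 hs' hc
        have hBt := betaFn_pos_s12 ht' hc
        rw [log_mul (rpow_pos_of_pos hBs a).ne' (rpow_pos_of_pos hBt b).ne', log_rpow hBs,
          log_rpow hBt]

lemma convexOn_betaFn {c : ℝ} (hc : 0 < c) : ConvexOn ℝ (Ioi 0) fun t => betaFn t c := by
  refine ⟨convex_Ioi 0, fun s hs t ht a b ha hb hab => ?_⟩
  calc betaFn (a * s + b * t) c ≤ betaFn s c ^ a * betaFn t c ^ b :=
        betaFn_mul_add_mul_le_rpow_mul_rpow hc hs ht ha hb hab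
    _ ≤ a * betaFn s c + b * betaFn t c := geom_mean_le_arith_mean2_weighted ha hb
        (betaFn_pos_s12 hs hc).le (betaFn_pos_s12 ht hc).le hab

lemma one_sub_mul_betaFn_div_one_sub {κ s : ℝ} (hκ : κ ≠ 1) (hs : s ≠ 1)
    (h : 1 - s * (κ - 1) ≠ 0) :
    (1 - s * (κ - 1)) * betaFn (s + κ * (1 - s)) (2 - κ) / (1 - s) =
      (κ - 1) * betaFn ((1 - s) * (κ - 1)) (2 - κ) := by
  have hs' : 1 - s ≠ 0 := sub_ne_zero.2 hs.symm
  have hy : (1 - s) * (κ - 1) ≠ 0 := mul_ne_zero hs' (sub_ne_zero.2 hκ)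
  have hyc : (1 - s) * (κ - 1) + (2 - κ) ≠ 0 := by convert h using 1; ring
  rw [show s + κ * (1 - s) = (1 - s) * (κ - 1) + 1 by ring,
    show 1 - s * (κ - 1) = (1 - s) * (κ - 1) + (2 - κ) by ring, add_mul_betaFn_add_one hy hyc]
  field_simp

lemma log_div_one_sub_add_log_betaFn {κ s : ℝ} (hκ1 : 1 < κ) (hκ2 : κ < 2)
    (hs : s ∈ Ioo (0 : ℝ) 1) :
    log ((1 - s * (κ - 1)) / (1 - s)) + log (betaFn (s + κ * (1 - s)) (2 - κ)) =
      log (κ - 1) + log (betaFn ((1 - s) * (κ - 1)) (2 - κ)) := by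
  have hk : 0 < κ - 1 := sub_pos.2 hκ1
  have hc : 0 < 2 - κ := sub_pos.2 hκ2
  have hA : 0 < (1 - s * (κ - 1)) / (1 - s) := div_pos (by nlinarith [hs.2]) (sub_pos.2 hs.2)
  have hB : 0 < betaFn (s + κ * (1 - s)) (2 - κ) := betaFn_pos_s12 (by nlinarith [hs.1, hs.2]) hc
  have hB' : 0 < betaFn ((1 - s) * (κ - 1)) (2 - κ) := betaFn_pos_s12 (mul_pos (sub_pos.2 hs.2) hk) hc
  rw [← log_mul hA.ne' hB.ne', div_mul_eq_mul_div,
    one_sub_mul_betaFn_div_one_sub hκ1.ne' hs.2.ne (by nlinarith [hs.2]), log_mul hk.ne' hB'.ne']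

theorem convexity_and_min_at_half (κ : ℝ) (hκ1 : 1 < κ) (hκ2 : κ < 2) :
    ConvexOn ℝ (Set.Ioo (0:ℝ) 1)
      (fun s => Real.log ((1 - s * (κ - 1)) / (1 - s)) +
        Real.log (betaFn (s + κ * (1 - s)) (2 - κ))) ∧
    ConvexOn ℝ (Set.Ioo (0:ℝ) 1)
      (fun s => (1 - s * (κ - 1)) * betaFn (s + κ * (1 - s)) (2 - κ) / (1 - s) +
        (1 - (1 - s) * (κ - 1)) * betaFn ((1 - s) + κ * s) (2 - κ) / s) ∧
    ∀ s ∈ Set.Ioo (0:ℝ) 1,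
      (1 - (1/2 : ℝ) * (κ - 1)) * betaFn ((1/2 : ℝ) + κ * (1 - (1/2 : ℝ))) (2 - κ) / (1 - (1/2 : ℝ)) +
        (1 - (1 - (1/2 : ℝ)) * (κ - 1)) * betaFn ((1 - (1/2 : ℝ)) + κ * (1/2 : ℝ)) (2 - κ) / (1/2 : ℝ)
      ≤ (1 - s * (κ - 1)) * betaFn (s + κ * (1 - s)) (2 - κ) / (1 - s) +
        (1 - (1 - s) * (κ - 1)) * betaFn ((1 - s) + κ * s) (2 - κ) / s := by
  have hk : 0 < κ - 1 := sub_pos.2 hκ1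
  have hc : 0 < 2 - κ := sub_pos.2 hκ2
  have hsummand : ∀ s ∈ Ioo (0 : ℝ) 1,
      (1 - s * (κ - 1)) * betaFn (s + κ * (1 - s)) (2 - κ) / (1 - s) =
        (κ - 1) * betaFn ((1 - s) * (κ - 1)) (2 - κ) := fun s hs =>
    one_sub_mul_betaFn_div_one_sub hκ1.ne' hs.2.ne (by nlinarith [hs.1, hs.2])
  have hsummand' : ∀ s ∈ Ioo (0 : ℝ) 1,
      (1 - (1 - s) * (κ - 1)) * betaFn ((1 - s) + κ * s) (2 - κ) / s =
        (κ - 1) * betaFn (s * (κ - 1)) (2 - κ) := fun s hs => by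
    simpa only [sub_sub_cancel] using hsummand (1 - s) ⟨sub_pos.2 hs.2, sub_lt_self 1 hs.1⟩
  have hmaps₁ : MapsTo (fun s => (1 - κ) * s + (κ - 1)) (Ioo 0 1) (Ioi 0) := fun s hs => by
    simp only [mem_Ioi]; nlinarith [hs.1, hs.2]
  have hmaps₂ : MapsTo (fun s => (κ - 1) * s + 0) (Ioo 0 1) (Ioi 0) := fun s hs => by
    simp only [mem_Ioi]; nlinarith [hs.1, hs.2]
  have hconvex : ConvexOn ℝ (Ioo 0 1) fun s =>
      (1 - s * (κ - 1)) * betaFn (s + κ * (1 - s)) (2 - κ) / (1 - s) +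
        (1 - (1 - s) * (κ - 1)) * betaFn ((1 - s) + κ * s) (2 - κ) / s :=
    ((((convexOn_betaFn hc).comp_mul_add (convex_Ioo 0 1) hmaps₁).smul hk.le).add
      (((convexOn_betaFn hc).comp_mul_add (convex_Ioo 0 1) hmaps₂).smul hk.le)).congr
      fun s hs => by
        simp only [Pi.add_apply, smul_eq_mul, hsummand s hs, hsummand' s hs]
        ring_nf
  refine ⟨?_, hconvex, fun s hs => hconvex.apply_half_le_of_symm
    (fun s _ => by simp only [sub_sub_cancel]; exact add_comm _ _) hs⟩
  refine ((convexOn_const (log (κ - 1)) (convex_Ioo 0 1)).add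
    ((convexOn_log_betaFn hc).comp_mul_add (convex_Ioo 0 1) hmaps₁)).congr fun s hs => ?_
  rw [Pi.add_apply, log_div_one_sub_add_log_betaFn hκ1 hκ2 hs]
  ring_nf
end
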